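/- arXiv:2304.05267 — 5 statements merged into one kernel-verified Lean document; each statement's English description precedes it below -/
import Mathlib

section
/- Let Γ be a simple graph and let g be an element of the right-angled Artin group A(Γ). A word over the alphabet V(Γ) ⊔ V(Γ)⁻¹ representing g has minimal length among all words representing g if and only if it is graphically reduced. -/
open Relation

universe u

/-- The defining relators of the right-angled Artin group of a simple graph. -/
def raagRels {V : Type u} (Γ : SimpleGraph V) : Set (FreeGroup V) :=
  {r | ∃ u v : V, Γ.Adj u v ∧
    r = FreeGroup.of u * FreeGroup.of v * (FreeGroup.of u)⁻¹ * (FreeGroup.of v)⁻¹}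

/-- The right-angled Artin group of a simple graph. -/
abbrev RAAG {V : Type u} (Γ : SimpleGraph V) : Type u := PresentedGroup (raagRels Γ)

/-- The generator of `RAAG Γ` corresponding to a vertex. -/
def raagGen {V : Type u} (Γ : SimpleGraph V) (u : V) : RAAG Γ :=
  PresentedGroup.of (rels := raagRels Γ) u

/-- The element of `RAAG Γ` represented by a word over `V(Γ) ⊔ V(Γ)⁻¹`. -/
def wordProd {V : Type u} (Γ : SimpleGraph V) (w : List (V × Bool)) : RAAG Γ :=
  (w.map fun p => if p.2 then raagGen Γ p.1 else (raagGen Γ p.1)⁻¹).prod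

/-- A shuffling swaps two consecutive letters whose vertices are adjacent. -/
def Shuffle {V : Type u} (Γ : SimpleGraph V) (w w' : List (V × Bool)) : Prop :=
  ∃ (l₁ l₂ : List (V × Bool)) (a b : V × Bool),
    Γ.Adj a.1 b.1 ∧ w = l₁ ++ a :: b :: l₂ ∧ w' = l₁ ++ b :: a :: l₂

/-- A free reduction deletes a consecutive pair of letters `u^ε u^(-ε)`. -/
def FreeRed {V : Type u} (_Γ : SimpleGraph V) (w w' : List (V × Bool)) : Prop :=
  ∃ (l₁ l₂ : List (V × Bool)) (u : V) (b : Bool),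
    w = l₁ ++ (u, b) :: (u, !b) :: l₂ ∧ w' = l₁ ++ l₂

/-- A word is graphically reduced if it cannot be shortened by finitely many
shufflings and free reductions. -/
def GraphReduced {V : Type u} (Γ : SimpleGraph V) (w : List (V × Bool)) : Prop :=
  ¬ ∃ w' : List (V × Bool),
    ReflTransGen (fun x y => Shuffle Γ x y ∨ FreeRed Γ x y) w w' ∧ w'.length < w.length

namespace RaagAux

variable {V : Type u} {Γ : SimpleGraph V}

/-- The formal inverse of a letter. -/
def bar (a : V × Bool) : V × Bool := (a.1, !a.2)

@[simp] lemma bar_bar (a : V × Bool) : bar (bar a) = a := by simp [bar]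

@[simp] lemma bar_fst (a : V × Bool) : (bar a).1 = a.1 := rfl

/-- `Del Γ a w t` : `w` contains an occurrence of `bar a` preceded only by letters
adjacent to the vertex of `a`, and deleting it yields `t`. -/
def Del (Γ : SimpleGraph V) (a : V × Bool) (w t : List (V × Bool)) : Prop :=
  ∃ m l, (∀ x ∈ m, Γ.Adj x.1 a.1) ∧ w = m ++ bar a :: l ∧ t = m ++ l

/-- Shuffle equivalence. -/
def Sh (Γ : SimpleGraph V) : List (V × Bool) → List (V × Bool) → Prop :=
  ReflTransGen (Shuffle Γ)

lemma shuffle_symm {w w' : List (V × Bool)} (h : Shuffle Γ w w') : Shuffle Γ w' w := by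
  obtain ⟨l₁, l₂, a, b, hab, rfl, rfl⟩ := h
  exact ⟨l₁, l₂, b, a, hab.symm, rfl, rfl⟩

lemma sh_symm {w w' : List (V × Bool)} (h : Sh Γ w w') : Sh Γ w' w :=
  by
  induction h with
  | refl => exact ReflTransGen.refl
  | tail _ hs ih => exact ReflTransGen.head (shuffle_symm hs) ih

lemma shuffle_length {w w' : List (V × Bool)} (h : Shuffle Γ w w') :
    w.length = w'.length := by
  obtain ⟨l₁, l₂, a, b, _, rfl, rfl⟩ := h
  simp

lemma sh_length {w w' : List (V × Bool)} (h : Sh Γ w w') : w.length = w'.length := by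
  induction h with
  | refl => rfl
  | tail _ h ih => exact ih.trans (shuffle_length h)

lemma shuffle_append_left (p : List (V × Bool)) {w w' : List (V × Bool)}
    (h : Shuffle Γ w w') : Shuffle Γ (p ++ w) (p ++ w') := by
  obtain ⟨l₁, l₂, a, b, hab, rfl, rfl⟩ := h
  exact ⟨p ++ l₁, l₂, a, b, hab, by simp, by simp⟩

lemma sh_append_left (p : List (V × Bool)) {w w' : List (V × Bool)}
    (h : Sh Γ w w') : Sh Γ (p ++ w) (p ++ w') :=
  ReflTransGen.lift (p ++ ·) (fun _ _ hs => shuffle_append_left p hs) _ _ h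

lemma shuffle_cons (x : V × Bool) {w w' : List (V × Bool)} (h : Shuffle Γ w w') :
    Shuffle Γ (x :: w) (x :: w') := shuffle_append_left [x] h

lemma sh_cons (x : V × Bool) {w w' : List (V × Bool)} (h : Sh Γ w w') :
    Sh Γ (x :: w) (x :: w') := sh_append_left [x] h

/-- Pushing a letter through a block of adjacent letters. -/
lemma csh {c : V × Bool} : ∀ (m : List (V × Bool)), (∀ x ∈ m, Γ.Adj x.1 c.1) →
    ∀ l, Sh Γ (c :: (m ++ l)) (m ++ c :: l) := by
  intro m
  induction m with
  | nil => intro _ l; exact ReflTransGen.refl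
  | cons x m' ih =>
    intro h l
    have h1 : Shuffle Γ (c :: x :: (m' ++ l)) (x :: c :: (m' ++ l)) :=
      ⟨[], m' ++ l, c, x, (h x (by simp)).symm, rfl, rfl⟩
    exact ReflTransGen.head h1 (sh_cons x (ih (fun y hy => h y (by simp [hy])) l))

lemma del_unique_aux (a : V × Bool) : ∀ (m₁ m₂ l₁ l₂ : List (V × Bool)),
    (∀ x ∈ m₁, Γ.Adj x.1 a.1) → (∀ x ∈ m₂, Γ.Adj x.1 a.1) →
    m₁ ++ bar a :: l₁ = m₂ ++ bar a :: l₂ → m₁ = m₂ ∧ l₁ = l₂ := by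
  intro m₁
  induction m₁ with
  | nil =>
    intro m₂ l₁ l₂ _ h₂ he
    cases m₂ with
    | nil => simpa using he
    | cons y m₂' =>
      simp only [List.nil_append, List.cons_append, List.cons.injEq] at he
      exact absurd (he.1 ▸ h₂ y (by simp)) (by simp [bar])
  | cons x m₁' ih =>
    intro m₂ l₁ l₂ h₁ h₂ he
    cases m₂ with
    | nil =>
      simp only [List.nil_append, List.cons_append, List.cons.injEq] at he
      exact absurd (he.1 ▸ h₁ x (by simp)) (by simp [bar])
    | cons y m₂' =>
      simp only [List.cons_append, List.cons.injEq] at he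
      obtain ⟨rfl, he2⟩ := he
      obtain ⟨rfl, rfl⟩ := ih m₂' l₁ l₂ (fun z hz => h₁ z (by simp [hz]))
        (fun z hz => h₂ z (by simp [hz])) he2
      exact ⟨rfl, rfl⟩

lemma del_unique {a : V × Bool} {w t₁ t₂ : List (V × Bool)}
    (h₁ : Del Γ a w t₁) (h₂ : Del Γ a w t₂) : t₁ = t₂ := by
  obtain ⟨m₁, l₁, hm₁, rfl, rfl⟩ := h₁
  obtain ⟨m₂, l₂, hm₂, he, rfl⟩ := h₂
  obtain ⟨rfl, rfl⟩ := del_unique_aux a m₁ m₂ l₁ l₂ hm₁ hm₂ he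
  rfl

/-- `act a w` : delete a cancellable occurrence of `bar a` if one exists,
otherwise prepend `a`. -/
noncomputable def act (a : V × Bool) (w : List (V × Bool)) : List (V × Bool) :=
  open scoped Classical in
  if h : ∃ t, Del Γ a w t then h.choose else a :: w

lemma act_del {a : V × Bool} {w t : List (V × Bool)} (h : Del Γ a w t) :
    act (Γ := Γ) a w = t := by
  rw [act, dif_pos ⟨t, h⟩]
  exact del_unique (Exists.choose_spec (⟨t, h⟩ : ∃ t, Del Γ a w t)) h

lemma act_nodel {a : V × Bool} {w : List (V × Bool)} (h : ¬ ∃ t, Del Γ a w t) :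
    act (Γ := Γ) a w = a :: w := by rw [act, dif_neg h]

lemma del_cons {a z : V × Bool} {w t : List (V × Bool)} (h : Del Γ a (z :: w) t) :
    (z = bar a ∧ t = w) ∨ (Γ.Adj z.1 a.1 ∧ ∃ t', Del Γ a w t' ∧ t = z :: t') := by
  obtain ⟨m, l, hm, he, rfl⟩ := h
  cases m with
  | nil =>
    simp only [List.nil_append, List.cons.injEq] at he
    exact Or.inl ⟨he.1, by simp [he.2]⟩
  | cons c m' =>
    simp only [List.cons_append, List.cons.injEq] at he
    obtain ⟨rfl, rfl⟩ := he
    exact Or.inr ⟨hm z (by simp), ⟨m' ++ l, ⟨m', l, fun x hx => hm x (by simp [hx]), rfl, rfl⟩,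
      rfl⟩⟩

lemma del_cons_build {a z : V × Bool} {w t : List (V × Bool)}
    (hz : Γ.Adj z.1 a.1) (h : Del Γ a w t) : Del Γ a (z :: w) (z :: t) := by
  obtain ⟨m, l, hm, rfl, rfl⟩ := h
  refine ⟨z :: m, l, ?_, rfl, rfl⟩
  intro x hx
  rcases List.mem_cons.1 hx with rfl | hx
  exacts [hz, hm x hx]

lemma del_head (a : V × Bool) (w : List (V × Bool)) : Del Γ a (bar a :: w) w :=
  ⟨[], w, by simp, rfl, rfl⟩

lemma del_append {a : V × Bool} : ∀ (m l t : List (V × Bool)), Del Γ a (m ++ l) t →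
    (∃ m₁ m₂, m = m₁ ++ bar a :: m₂ ∧ (∀ x ∈ m₁, Γ.Adj x.1 a.1) ∧ t = m₁ ++ m₂ ++ l) ∨
    ((∀ x ∈ m, Γ.Adj x.1 a.1) ∧ ∃ t', Del Γ a l t' ∧ t = m ++ t') := by
  intro m
  induction m with
  | nil => intro l t h; exact Or.inr ⟨by simp, t, h, rfl⟩
  | cons z m' ih =>
    intro l t h
    rcases del_cons h with ⟨rfl, rfl⟩ | ⟨hadj, t', hd', rfl⟩
    · exact Or.inl ⟨[], m', rfl, by simp, rfl⟩
    · rcases ih l t' hd' with ⟨m₁, m₂, rfl, hm₁, rfl⟩ | ⟨hm', s, hs, rfl⟩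
      · refine Or.inl ⟨z :: m₁, m₂, rfl, ?_, by simp⟩
        intro x hx
        rcases List.mem_cons.1 hx with rfl | hx
        exacts [hadj, hm₁ x hx]
      · refine Or.inr ⟨?_, s, hs, by simp⟩
        intro x hx
        rcases List.mem_cons.1 hx with rfl | hx
        exacts [hadj, hm' x hx]

lemma del_append_right {a : V × Bool} {m l t : List (V × Bool)}
    (hm : ∀ x ∈ m, Γ.Adj x.1 a.1) (h : Del Γ a l t) : Del Γ a (m ++ l) (m ++ t) := by
  obtain ⟨mm, ll, hmm, rfl, rfl⟩ := h
  refine ⟨m ++ mm, ll, ?_, by simp, by simp⟩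
  intro x hx
  rcases List.mem_append.1 hx with hx | hx
  exacts [hm x hx, hmm x hx]

/-- A word is locally reduced: no letter can cancel into its tail through
adjacent letters. -/
def Red (Γ : SimpleGraph V) (w : List (V × Bool)) : Prop :=
  ∀ l₁ (a : V × Bool) l₂, w = l₁ ++ a :: l₂ → ∀ t, ¬ Del Γ a l₂ t

lemma red_nil : Red Γ [] := by
  intro l₁ a l₂ he
  exact absurd he (by simp)

lemma red_tail {x : V × Bool} {w : List (V × Bool)} (h : Red Γ (x :: w)) : Red Γ w :=
  fun l₁ a l₂ he => h (x :: l₁) a l₂ (by simp [he])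

lemma red_cons_head {x : V × Bool} {w : List (V × Bool)} (h : Red Γ (x :: w)) :
    ¬ ∃ t, Del Γ x w t := by
  rintro ⟨t, ht⟩
  exact h [] x w rfl t ht

lemma red_del {a : V × Bool} {w t : List (V × Bool)} (hw : Red Γ w) (hd : Del Γ a w t) :
    Red Γ t := by
  obtain ⟨m, l, hm, rfl, rfl⟩ := hd
  intro p₁ c p₂ he t' hd'
  rcases List.append_eq_append_iff.1 he with ⟨a', rfl, rfl⟩ | ⟨c', rfl, hc⟩
  · -- c lies in l
    exact hw (m ++ bar a :: a') c p₂ (by simp) t' hd'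
  · cases c' with
    | nil =>
      simp only [List.nil_append] at hc
      exact hw (p₁ ++ [bar a]) c p₂ (by simp [← hc]) t' hd'
    | cons c'' cs =>
      simp only [List.cons_append, List.cons.injEq] at hc
      obtain ⟨rfl, rfl⟩ := hc
      -- w = p₁ ++ c :: (cs ++ bar a :: l), and Del c (cs ++ l) t'
      have hcadj : Γ.Adj c.1 a.1 := hm c (by simp)
      rcases del_append cs l t' hd' with ⟨m₁, m₂, rfl, hm₁, rfl⟩ | ⟨hcs, s, hs, rfl⟩
      · exact hw p₁ c ((m₁ ++ bar c :: m₂) ++ bar a :: l) (by simp) (m₁ ++ (m₂ ++ bar a :: l))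
          ⟨m₁, m₂ ++ bar a :: l, hm₁, by simp, rfl⟩
      · exact hw p₁ c (cs ++ bar a :: l) (by simp) (cs ++ bar a :: s)
          (del_append_right hcs (del_cons_build (by simpa using hcadj.symm) hs))

lemma red_act {a : V × Bool} {w : List (V × Bool)} (hw : Red Γ w) :
    Red Γ (act (Γ := Γ) a w) := by
  by_cases h : ∃ t, Del Γ a w t
  · obtain ⟨t, ht⟩ := h
    rw [act_del ht]
    exact red_del hw ht
  · rw [act_nodel h]
    intro p₁ c p₂ he t hd
    cases p₁ with
    | nil =>
      simp only [List.nil_append, List.cons.injEq] at he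
      obtain ⟨rfl, rfl⟩ := he
      exact h ⟨t, hd⟩
    | cons y p₁' =>
      simp only [List.cons_append, List.cons.injEq] at he
      exact hw p₁' c p₂ he.2 t hd

lemma red_cons_of_nodel {a : V × Bool} {w : List (V × Bool)} (hw : Red Γ w)
    (h : ¬ ∃ t, Del Γ a w t) : Red Γ (a :: w) := by
  have := red_act (a := a) hw
  rwa [act_nodel h] at this

lemma act_act_bar {a : V × Bool} {w : List (V × Bool)} (hw : Red Γ w) :
    Sh Γ (act (Γ := Γ) (bar a) (act (Γ := Γ) a w)) w := by
  by_cases h : ∃ t, Del Γ a w t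
  · obtain ⟨t, ht⟩ := h
    rw [act_del ht]
    obtain ⟨m, l, hm, rfl, rfl⟩ := ht
    have hnd : ¬ ∃ s, Del Γ (bar a) (m ++ l) s := by
      rintro ⟨s, hs⟩
      rcases del_append m l s hs with ⟨m₁, m₂, he, _, _⟩ | ⟨_, s', hs', _⟩
      · have hthis : Γ.Adj (bar (bar a)).1 a.1 := hm (bar (bar a)) (by rw [he]; simp)
        simp [bar] at hthis
      · exact hw m (bar a) l rfl s' hs'
    rw [act_nodel hnd]
    exact csh (c := bar a) m hm l
  · rw [act_nodel h, act_del (show Del Γ (bar a) (a :: w) w by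
      simpa using del_head (Γ := Γ) (bar a) w)]
    exact ReflTransGen.refl

lemma act_bar_act {a : V × Bool} {w : List (V × Bool)} (hw : Red Γ w) :
    Sh Γ (act (Γ := Γ) a (act (Γ := Γ) (bar a) w)) w := by
  simpa using act_act_bar (a := bar a) hw

lemma shuffle_del_aux {a : V × Bool} : ∀ (l₁ m : List (V × Bool)),
    (∀ x ∈ m, Γ.Adj x.1 a.1) → ∀ (x y : V × Bool) (l₂ l : List (V × Bool)),
    Γ.Adj x.1 y.1 → m ++ bar a :: l = l₁ ++ x :: y :: l₂ →
    ∃ t', Del Γ a (l₁ ++ y :: x :: l₂) t' ∧ Sh Γ (m ++ l) t' := by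
  intro l₁
  induction l₁ with
  | nil =>
    intro m hm x y l₂ l hxy he
    cases m with
    | nil =>
      simp only [List.nil_append, List.cons.injEq] at he
      obtain ⟨h1, h2⟩ := he
      subst h2
      refine ⟨y :: l₂, ⟨[y], l₂, ?_, by simp [h1], rfl⟩, ReflTransGen.refl⟩
      intro z hz
      rcases List.mem_cons.1 hz with rfl | hz
      · rw [← h1] at hxy
        simpa using hxy.symm
      · simp at hz
    | cons c m' =>
      cases m' with
      | nil =>
        simp only [List.cons_append, List.nil_append, List.cons.injEq] at he
        obtain ⟨h1, h2, h3⟩ := he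
        refine ⟨x :: l₂, ⟨[], x :: l₂, by simp, by simp [← h2], rfl⟩, ?_⟩
        simp only [List.cons_append, List.nil_append]
        rw [h1, h3]
        exact ReflTransGen.refl
      | cons d m'' =>
        simp only [List.cons_append, List.nil_append] at he
        injection he with h1 he2
        injection he2 with h2 h3
        refine ⟨y :: x :: (m'' ++ l), ⟨y :: x :: m'', l, ?_, by simp [h3], by simp⟩, ?_⟩
        · intro z hz
          rcases List.mem_cons.1 hz with rfl | hz
          · exact h2 ▸ hm d (by simp)
          rcases List.mem_cons.1 hz with rfl | hz
          · exact h1 ▸ hm c (by simp)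
          · exact hm z (by simp [hz])
        · simp only [List.cons_append]
          rw [h1, h2]
          exact ReflTransGen.single ⟨[], m'' ++ l, x, y, hxy, rfl, rfl⟩
  | cons z l₁' ih =>
    intro m hm x y l₂ l hxy he
    cases m with
    | nil =>
      simp only [List.nil_append, List.cons_append, List.cons.injEq] at he
      obtain ⟨h1, h2⟩ := he
      refine ⟨l₁' ++ y :: x :: l₂, ⟨[], l₁' ++ y :: x :: l₂, by simp, by simp [← h1], rfl⟩,
        ?_⟩
      rw [List.nil_append, h2]
      exact ReflTransGen.single ⟨l₁', l₂, x, y, hxy, rfl, rfl⟩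
    | cons c m' =>
      simp only [List.cons_append, List.cons.injEq] at he
      obtain ⟨h1, h2⟩ := he
      obtain ⟨t₀, hd₀, hsh₀⟩ := ih m' (fun u hu => hm u (by simp [hu])) x y l₂ l hxy h2
      refine ⟨z :: t₀, del_cons_build (h1 ▸ hm c (by simp)) hd₀, ?_⟩
      simp only [List.cons_append]
      rw [h1]
      exact sh_cons z hsh₀

lemma shuffle_del {a : V × Bool} {w w' t : List (V × Bool)} (hs : Shuffle Γ w w')
    (hd : Del Γ a w t) : ∃ t', Del Γ a w' t' ∧ Sh Γ t t' := by
  obtain ⟨l₁, l₂, x, y, hxy, rfl, rfl⟩ := hs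
  obtain ⟨m, l, hm, he, rfl⟩ := hd
  exact shuffle_del_aux l₁ m hm x y l₂ l hxy he.symm

lemma act_shuffle {a : V × Bool} {w w' : List (V × Bool)} (hs : Shuffle Γ w w') :
    Sh Γ (act (Γ := Γ) a w) (act (Γ := Γ) a w') := by
  by_cases h : ∃ t, Del Γ a w t
  · obtain ⟨t, ht⟩ := h
    obtain ⟨t', hd', hsh⟩ := shuffle_del hs ht
    rw [act_del ht, act_del hd']
    exact hsh
  · have h' : ¬ ∃ t, Del Γ a w' t := by
      rintro ⟨t, ht⟩
      obtain ⟨t'', hd'', _⟩ := shuffle_del (shuffle_symm hs) ht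
      exact h ⟨t'', hd''⟩
    rw [act_nodel h, act_nodel h']
    exact ReflTransGen.single (shuffle_cons a hs)

lemma act_sh {a : V × Bool} {w w' : List (V × Bool)} (hs : Sh Γ w w') :
    Sh Γ (act (Γ := Γ) a w) (act (Γ := Γ) a w') := by
  induction hs with
  | refl => exact ReflTransGen.refl
  | tail _ h ih => exact ih.trans (act_shuffle h)

lemma bar_ne_of_adj {a b : V × Bool} (hab : Γ.Adj a.1 b.1) : b ≠ bar a := by
  intro h
  subst h
  exact Γ.irrefl hab

lemma comm_aux1 {a b : V × Bool} (hab : Γ.Adj a.1 b.1)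
    {w t : List (V × Bool)} (hnb : ¬ ∃ s, Del Γ b w s) (hda : Del Γ a w t) :
    act (Γ := Γ) a (act (Γ := Γ) b w) = act (Γ := Γ) b (act (Γ := Γ) a w) := by
  rw [act_nodel hnb, act_del hda, act_del (del_cons_build hab.symm hda)]
  obtain ⟨m, l, hm, rfl, rfl⟩ := hda
  have hnd : ¬ ∃ s, Del Γ b (m ++ l) s := by
    rintro ⟨s, hs⟩
    rcases del_append m l s hs with ⟨m₁, m₂, rfl, hm₁, _⟩ | ⟨hmb, s', hs', _⟩
    · exact hnb ⟨m₁ ++ (m₂ ++ bar a :: l), m₁, m₂ ++ bar a :: l, hm₁, by simp, rfl⟩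
    · exact hnb ⟨m ++ bar a :: s',
        del_append_right hmb (del_cons_build (by simpa using hab) hs')⟩
  rw [act_nodel hnd]

lemma comm_aux2 {a b : V × Bool} (hab : Γ.Adj a.1 b.1)
    {m t l : List (V × Bool)} (hma : ∀ x ∈ m, Γ.Adj x.1 a.1)
    (hmb : ∀ x ∈ m, Γ.Adj x.1 b.1) (htb : ∀ x ∈ t, Γ.Adj x.1 b.1) :
    act (Γ := Γ) a (act (Γ := Γ) b (m ++ bar a :: (t ++ bar b :: l))) =
      act (Γ := Γ) b (act (Γ := Γ) a (m ++ bar a :: (t ++ bar b :: l))) := by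
  have h1 : Del Γ b (m ++ bar a :: (t ++ bar b :: l)) (m ++ bar a :: (t ++ l)) := by
    refine ⟨m ++ bar a :: t, l, ?_, by simp, by simp⟩
    intro x hx
    rcases List.mem_append.1 hx with hx | hx
    · exact hmb x hx
    · rcases List.mem_cons.1 hx with rfl | hx
      · simpa using hab
      · exact htb x hx
  have h2 : Del Γ a (m ++ bar a :: (t ++ l)) (m ++ (t ++ l)) := ⟨m, t ++ l, hma, rfl, rfl⟩
  have h3 : Del Γ a (m ++ bar a :: (t ++ bar b :: l)) (m ++ (t ++ bar b :: l)) :=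
    ⟨m, t ++ bar b :: l, hma, rfl, rfl⟩
  have h4 : Del Γ b (m ++ (t ++ bar b :: l)) (m ++ (t ++ l)) := by
    refine ⟨m ++ t, l, ?_, by simp, by simp⟩
    intro x hx
    rcases List.mem_append.1 hx with hx | hx
    exacts [hmb x hx, htb x hx]
  rw [act_del h1, act_del h2, act_del h3, act_del h4]

lemma comm_main {a b : V × Bool} (hab : Γ.Adj a.1 b.1) (w : List (V × Bool)) :
    Sh Γ (act (Γ := Γ) a (act (Γ := Γ) b w)) (act (Γ := Γ) b (act (Γ := Γ) a w)) := by
  by_cases hA : ∃ t, Del Γ a w t <;> by_cases hB : ∃ t, Del Γ b w t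
  · -- both cancel
    obtain ⟨t₁, hd₁⟩ := hA
    obtain ⟨t₂, hd₂⟩ := hB
    obtain ⟨m₁, l₁, hm₁, rfl, rfl⟩ := hd₁
    rcases del_append m₁ (bar a :: l₁) t₂ hd₂ with ⟨p, q, rfl, hpb, _⟩ | ⟨hm₁b, s, hs, _⟩
    · -- bar b occurs before bar a
      have key := comm_aux2 (a := b) (b := a) hab.symm
        (m := p) (t := q) (l := l₁)
        hpb (fun x hx => hm₁ x (by simp [hx]))
        (fun x hx => hm₁ x (by simp [hx]))
      have hweq : p ++ bar b :: (q ++ bar a :: l₁) = (p ++ bar b :: q) ++ bar a :: l₁ := by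
        simp
      rw [hweq] at key
      rw [key]
      exact ReflTransGen.refl
    · -- bar a occurs before bar b
      rcases del_cons hs with ⟨he, _⟩ | ⟨_, s', hs', _⟩
      · have hfst := congrArg Prod.fst he
        rw [bar_fst, bar_fst] at hfst
        rw [hfst] at hab
        exact (Γ.irrefl hab).elim
      · obtain ⟨mm, ll, hmm, rfl, rfl⟩ := hs'
        rw [comm_aux2 hab hm₁ hm₁b hmm]
        exact ReflTransGen.refl
  · obtain ⟨t, ht⟩ := hA
    rw [comm_aux1 hab hB ht]
    exact ReflTransGen.refl
  · obtain ⟨t, ht⟩ := hB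
    rw [comm_aux1 hab.symm hA ht]
    exact ReflTransGen.refl
  · -- neither cancels
    rw [act_nodel hA, act_nodel hB]
    have hA' : ¬ ∃ t, Del Γ a (b :: w) t := by
      rintro ⟨t, ht⟩
      rcases del_cons ht with ⟨he, _⟩ | ⟨_, t', ht', _⟩
      · exact bar_ne_of_adj hab he
      · exact hA ⟨t', ht'⟩
    have hB' : ¬ ∃ t, Del Γ b (a :: w) t := by
      rintro ⟨t, ht⟩
      rcases del_cons ht with ⟨he, _⟩ | ⟨_, t', ht', _⟩
      · exact bar_ne_of_adj hab.symm he
      · exact hB ⟨t', ht'⟩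
    rw [act_nodel hA', act_nodel hB']
    exact ReflTransGen.single ⟨[], w, a, b, hab, rfl, rfl⟩

/-! ### The action on shuffle classes of reduced words -/

instance rwSetoid (Γ : SimpleGraph V) : Setoid {w : List (V × Bool) // Red Γ w} :=
  ⟨fun x y => Sh Γ x.1 y.1,
    ⟨fun _ => ReflTransGen.refl, sh_symm, ReflTransGen.trans⟩⟩

/-- Shuffle classes of reduced words. -/
def Q (Γ : SimpleGraph V) : Type u := Quotient (rwSetoid Γ)

/-- The action of a letter on reduced words. -/
noncomputable def actR (a : V × Bool) (w : {w : List (V × Bool) // Red Γ w}) :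
    {w : List (V × Bool) // Red Γ w} :=
  ⟨act (Γ := Γ) a w.1, red_act w.2⟩

/-- The action of a letter on shuffle classes. -/
noncomputable def actQ (a : V × Bool) : Q Γ → Q Γ :=
  Quotient.map (actR a) (fun _ _ h => act_sh h)

lemma actQ_mk (a : V × Bool) (w : {w : List (V × Bool) // Red Γ w}) :
    actQ a (⟦w⟧ : Q Γ) = ⟦actR a w⟧ := rfl

/-- The permutation of `Q Γ` induced by a vertex. -/
noncomputable def perm (Γ : SimpleGraph V) (p : V) : Equiv.Perm (Q Γ) where
  toFun := actQ (p, true)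
  invFun := actQ (p, false)
  left_inv := by
    intro q
    induction q using Quotient.inductionOn with
    | h w =>
      rw [actQ_mk, actQ_mk]
      exact Quotient.sound (act_act_bar (a := (p, true)) w.2)
  right_inv := by
    intro q
    induction q using Quotient.inductionOn with
    | h w =>
      rw [actQ_mk, actQ_mk]
      exact Quotient.sound (act_bar_act (a := (p, true)) w.2)

lemma perm_comm {u v : V} (huv : Γ.Adj u v) : perm Γ u * perm Γ v = perm Γ v * perm Γ u := by
  ext q
  induction q using Quotient.inductionOn with
  | h w =>
    show actQ (u, true) (actQ (v, true) ⟦w⟧) = actQ (v, true) (actQ (u, true) ⟦w⟧)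
    rw [actQ_mk, actQ_mk, actQ_mk, actQ_mk]
    exact Quotient.sound (comm_main (a := (u, true)) (b := (v, true)) huv w.1)

lemma rels_map_one : ∀ r ∈ raagRels Γ, FreeGroup.lift (perm Γ) r = 1 := by
  rintro r ⟨u, v, huv, rfl⟩
  have hc := perm_comm huv
  simp only [map_mul, map_inv, FreeGroup.lift_apply_of]
  rw [hc]
  group

/-- The homomorphism from the RAAG to permutations of shuffle classes. -/
noncomputable def phi (Γ : SimpleGraph V) : RAAG Γ →* Equiv.Perm (Q Γ) :=
  PresentedGroup.toGroup rels_map_one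

lemma phi_gen (p : V) : phi Γ (raagGen Γ p) = perm Γ p :=
  PresentedGroup.toGroup.of rels_map_one

lemma phi_letter (x : V × Bool) (q : Q Γ) :
    phi Γ (if x.2 then raagGen Γ x.1 else (raagGen Γ x.1)⁻¹) q = actQ x q := by
  obtain ⟨p, b⟩ := x
  cases b
  · simp only [Bool.false_eq_true, if_false, map_inv, phi_gen]
    rfl
  · simp only [if_true, phi_gen]
    rfl

/-- Length of a shuffle class. -/
noncomputable def len : Q Γ → ℕ :=
  Quotient.lift (fun w => w.1.length) (fun _ _ h => sh_length h)

lemma len_mk (w : {w : List (V × Bool) // Red Γ w}) : len (⟦w⟧ : Q Γ) = w.1.length := rfl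

lemma len_actQ (a : V × Bool) (q : Q Γ) : len (actQ a q) ≤ len q + 1 := by
  induction q using Quotient.inductionOn with
  | h w =>
    rw [actQ_mk, len_mk, len_mk]
    show (act (Γ := Γ) a w.1).length ≤ w.1.length + 1
    by_cases h : ∃ t, Del Γ a w.1 t
    · obtain ⟨t, ht⟩ := h
      rw [act_del ht]
      obtain ⟨m, l, _, he, rfl⟩ := ht
      rw [he]
      simp
      omega
    · rw [act_nodel h]
      simp

lemma wordProd_cons (x : V × Bool) (w : List (V × Bool)) :
    wordProd Γ (x :: w) =
      (if x.2 then raagGen Γ x.1 else (raagGen Γ x.1)⁻¹) * wordProd Γ w := by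
  simp [wordProd]

lemma wordProd_append (w₁ w₂ : List (V × Bool)) :
    wordProd Γ (w₁ ++ w₂) = wordProd Γ w₁ * wordProd Γ w₂ := by
  simp [wordProd]

lemma len_phi_le (w : List (V × Bool)) (q : Q Γ) :
    len (phi Γ (wordProd Γ w) q) ≤ w.length + len q := by
  induction w with
  | nil =>
    simp only [wordProd, List.map_nil, List.prod_nil, map_one, Equiv.Perm.coe_one, id_eq,
      List.length_nil, zero_add, le_refl]
  | cons x w ih =>
    rw [wordProd_cons, map_mul]
    calc len ((phi Γ (if x.2 then raagGen Γ x.1 else (raagGen Γ x.1)⁻¹) *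
            phi Γ (wordProd Γ w)) q)
        = len (phi Γ (if x.2 then raagGen Γ x.1 else (raagGen Γ x.1)⁻¹)
            (phi Γ (wordProd Γ w) q)) := by rw [Equiv.Perm.mul_apply]
      _ = len (actQ x (phi Γ (wordProd Γ w) q)) := by rw [phi_letter]
      _ ≤ len (phi Γ (wordProd Γ w) q) + 1 := len_actQ x _
      _ ≤ (w.length + len q) + 1 := by omega
      _ = (x :: w).length + len q := by simp; omega

/-- The empty class. -/
noncomputable def emptyQ (Γ : SimpleGraph V) : Q Γ := ⟦⟨[], red_nil⟩⟧

lemma phi_red (w : List (V × Bool)) (hw : Red Γ w) :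
    phi Γ (wordProd Γ w) (emptyQ Γ) = ⟦⟨w, hw⟩⟧ := by
  induction w with
  | nil =>
    simp only [wordProd, List.map_nil, List.prod_nil, map_one, Equiv.Perm.coe_one, id_eq]
    rfl
  | cons x w ih =>
    rw [wordProd_cons, map_mul, Equiv.Perm.mul_apply, phi_letter, ih (red_tail hw), actQ_mk]
    apply Quotient.sound
    show Sh Γ (act (Γ := Γ) x w) (x :: w)
    rw [act_nodel (red_cons_head hw)]
    exact ReflTransGen.refl

theorem word_length_le {w w' : List (V × Bool)} (hR : Red Γ w)
    (h : wordProd Γ w' = wordProd Γ w) : w.length ≤ w'.length := by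
  have h1 : phi Γ (wordProd Γ w) (emptyQ Γ) = ⟦⟨w, hR⟩⟧ := phi_red w hR
  have h2 : len (phi Γ (wordProd Γ w') (emptyQ Γ)) ≤ w'.length + len (emptyQ Γ) :=
    len_phi_le w' (emptyQ Γ)
  rw [h, h1] at h2
  have h3 : len (⟦⟨w, hR⟩⟧ : Q Γ) = w.length := rfl
  have h4 : len (emptyQ Γ) = 0 := rfl
  omega

/-! ### Steps preserve the represented group element -/

lemma comm_gen {u v : V} (h : Γ.Adj u v) : Commute (raagGen Γ u) (raagGen Γ v) := by
  have hr : (FreeGroup.of u * FreeGroup.of v * (FreeGroup.of u)⁻¹ * (FreeGroup.of v)⁻¹ :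
      FreeGroup V) ∈ raagRels Γ := ⟨u, v, h, rfl⟩
  have h1 : ((QuotientGroup.mk (FreeGroup.of u * FreeGroup.of v * (FreeGroup.of u)⁻¹ *
      (FreeGroup.of v)⁻¹) : RAAG Γ)) = 1 :=
    (QuotientGroup.eq_one_iff _).2 (Subgroup.subset_normalClosure hr)
  have h2 : raagGen Γ u * raagGen Γ v * (raagGen Γ u)⁻¹ * (raagGen Γ v)⁻¹ = 1 := h1
  rw [commute_iff_eq]
  have h3 := mul_inv_eq_one.1 h2
  exact (mul_inv_eq_iff_eq_mul.1 h3)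

lemma comm_letter {x y : V × Bool} (h : Γ.Adj x.1 y.1) :
    Commute (if x.2 then raagGen Γ x.1 else (raagGen Γ x.1)⁻¹)
      (if y.2 then raagGen Γ y.1 else (raagGen Γ y.1)⁻¹) := by
  have hc := comm_gen h
  have h1 : Commute (if x.2 then raagGen Γ x.1 else (raagGen Γ x.1)⁻¹) (raagGen Γ y.1) := by
    cases x.2
    · simpa using hc.inv_left
    · simpa using hc
  cases y.2
  · simpa using h1.inv_right
  · simpa using h1

lemma wordProd_shuffle {w w' : List (V × Bool)} (h : Shuffle Γ w w') :
    wordProd Γ w = wordProd Γ w' := by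
  obtain ⟨l₁, l₂, x, y, hxy, rfl, rfl⟩ := h
  rw [wordProd_append, wordProd_append, wordProd_cons, wordProd_cons,
    wordProd_cons, wordProd_cons, ← mul_assoc
      (if x.2 then raagGen Γ x.1 else (raagGen Γ x.1)⁻¹), (comm_letter hxy).eq, mul_assoc]

lemma wordProd_freered {w w' : List (V × Bool)} (h : FreeRed Γ w w') :
    wordProd Γ w = wordProd Γ w' := by
  obtain ⟨l₁, l₂, u, b, rfl, rfl⟩ := h
  rw [wordProd_append, wordProd_append, wordProd_cons, wordProd_cons]
  cases b <;> simp [mul_assoc]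

lemma wordProd_steps {w w' : List (V × Bool)}
    (h : ReflTransGen (fun x y => Shuffle Γ x y ∨ FreeRed Γ x y) w w') :
    wordProd Γ w = wordProd Γ w' := by
  induction h with
  | refl => rfl
  | tail _ h ih =>
    rcases h with h | h
    · exact ih.trans (wordProd_shuffle h)
    · exact ih.trans (wordProd_freered h)

lemma red_of_graphReduced {w : List (V × Bool)} (h : GraphReduced Γ w) : Red Γ w := by
  by_contra hnr
  rw [Red] at hnr
  push_neg at hnr
  obtain ⟨l₁, a, l₂, he, t, hd⟩ := hnr
  obtain ⟨m, l, hm, rfl, rfl⟩ := hd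
  apply h
  have s1 : Sh Γ (a :: (m ++ bar a :: l)) (m ++ a :: bar a :: l) := csh m hm (bar a :: l)
  have s2 : Sh Γ (l₁ ++ a :: (m ++ bar a :: l)) (l₁ ++ (m ++ a :: bar a :: l)) :=
    sh_append_left l₁ s1
  have s3 : ReflTransGen (fun x y => Shuffle Γ x y ∨ FreeRed Γ x y)
      (l₁ ++ a :: (m ++ bar a :: l)) (l₁ ++ (m ++ a :: bar a :: l)) :=
    ReflTransGen.mono (fun _ _ hs => Or.inl hs) _ _ s2
  have s4 : FreeRed Γ (l₁ ++ (m ++ a :: bar a :: l)) (l₁ ++ (m ++ l)) := by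
    refine ⟨l₁ ++ m, l, a.1, a.2, ?_, by simp⟩
    show l₁ ++ (m ++ a :: bar a :: l) = (l₁ ++ m) ++ (a.1, a.2) :: (a.1, !a.2) :: l
    simp [bar]
  refine ⟨l₁ ++ (m ++ l), ReflTransGen.tail (by rw [he]; exact s3) (Or.inr s4), ?_⟩
  rw [he]
  simp only [List.length_append, List.length_cons]
  omega

end RaagAux

open RaagAux in
/-- A word over `V(Γ) ⊔ V(Γ)⁻¹` representing `g ∈ A(Γ)` has minimal length among all
words representing `g` if and only if it is graphically reduced. -/
theorem minimal_length_iff_graphReduced {V : Type u} (Γ : SimpleGraph V) (g : RAAG Γ)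
    (w : List (V × Bool)) (hw : wordProd Γ w = g) :
    (∀ w' : List (V × Bool), wordProd Γ w' = g → w.length ≤ w'.length) ↔
      GraphReduced Γ w := by
  constructor
  · rintro hmin ⟨w', hsteps, hlt⟩
    have hprod : wordProd Γ w' = g := by rw [← wordProd_steps hsteps, hw]
    exact absurd (hmin w' hprod) (by omega)
  · intro hred w' hw'
    exact word_length_le (red_of_graphReduced hred) (by rw [hw', hw])
end

section
/- Let Γ be a simple graph and Λ an induced subgraph of Γ. The inclusion map V(Λ) → V(Γ) induces an injective group homomorphism A(Λ) → A(Γ). -/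
universe u

/-- The defining commutation relation holds in `RAAG Γ`. -/
lemma raag_comm {V : Type u} (Γ : SimpleGraph V) {u v : V} (h : Γ.Adj u v) :
    raagGen Γ u * raagGen Γ v * (raagGen Γ u)⁻¹ * (raagGen Γ v)⁻¹ = 1 := by
  have h1 : PresentedGroup.mk (raagRels Γ)
      (FreeGroup.of u * FreeGroup.of v * (FreeGroup.of u)⁻¹ * (FreeGroup.of v)⁻¹) = 1 := by
    refine (QuotientGroup.eq_one_iff _).2 ?_
    exact Subgroup.subset_normalClosure ⟨u, v, h, rfl⟩
  simpa [raagGen, PresentedGroup.of, map_mul, map_inv] using h1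

/-- For an induced subgraph `Λ` of `Γ` (given by a set `S` of vertices), the inclusion
of vertices induces an injective group homomorphism `A(Λ) → A(Γ)`. -/
theorem raag_induce_embeds {V : Type u} (Γ : SimpleGraph V) (S : Set V) :
    ∃ f : RAAG (Γ.induce S) →* RAAG Γ,
      Function.Injective f ∧ ∀ u : S, f (raagGen (Γ.induce S) u) = raagGen Γ (u : V) := by
  classical
  -- forward map
  have hf : ∀ r ∈ raagRels (Γ.induce S),
      FreeGroup.lift (fun u : S => raagGen Γ (u : V)) r = 1 := by
    rintro r ⟨u, v, huv, rfl⟩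
    have hadj : Γ.Adj (u : V) (v : V) := huv
    simpa using raag_comm Γ hadj
  set f := PresentedGroup.toGroup hf with hfdef
  -- retraction
  have hg : ∀ r ∈ raagRels Γ,
      FreeGroup.lift (fun v : V => if h : v ∈ S then raagGen (Γ.induce S) ⟨v, h⟩ else 1) r = 1 := by
    rintro r ⟨u, v, huv, rfl⟩
    by_cases hu : u ∈ S
    · by_cases hv : v ∈ S
      · have hadj : (Γ.induce S).Adj ⟨u, hu⟩ ⟨v, hv⟩ := huv
        simpa [hu, hv] using raag_comm (Γ.induce S) hadj
      · simp [hu, hv]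
    · simp [hu]
  set g := PresentedGroup.toGroup hg with hgdef
  have hcomp : g.comp f = MonoidHom.id _ := by
    ext u
    simp [hfdef, hgdef, raagGen, u.2]
  refine ⟨f, ?_, fun u => by simp [hfdef, raagGen]⟩
  have hli : Function.LeftInverse g f := fun x => by
    have := DFunLike.congr_fun hcomp x
    simpa using this
  exact hli.injective
end

section
/- Let Γ be a simple graph. The right-angled Artin group A(Γ) is a free group if and only if Γ has no edge; moreover, if Γ has at least one edge, then A(Γ) contains a subgroup isomorphic to ℤ × ℤ. -/
universe u

open Multiplicative in
lemma not_cyclic_zz :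
    ¬ ∃ g : Multiplicative ℤ × Multiplicative ℤ, ∀ x, ∃ k : ℤ, g ^ k = x := by
  rintro ⟨⟨a, b⟩, hg⟩
  obtain ⟨m, hm⟩ := hg (ofAdd 1, 1)
  obtain ⟨n, hn⟩ := hg (1, ofAdd 1)
  rw [Prod.ext_iff] at hm hn
  have h1 : m * a.toAdd = 1 := by
    have := congrArg Multiplicative.toAdd hm.1
    simpa [smul_eq_mul] using this
  have h2 : n * a.toAdd = 0 := by
    have := congrArg Multiplicative.toAdd hn.1
    simpa [smul_eq_mul] using this
  have h3 : n * b.toAdd = 1 := by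
    have := congrArg Multiplicative.toAdd hn.2
    simpa [smul_eq_mul] using this
  have ha : a.toAdd ≠ 0 := by rintro h; rw [h] at h1; omega
  have hn0 : n = 0 := by rcases mul_eq_zero.mp h2 with h | h; exact h; exact absurd h ha
  rw [hn0] at h3; omega

lemma comm_free_contradiction {X : Type*}
    (e : (Multiplicative ℤ × Multiplicative ℤ) ≃* FreeGroup X) : False := by
  classical
  have comm : ∀ a b : FreeGroup X, a * b = b * a := fun a b =>
    e.symm.injective (by simp [map_mul, mul_comm])
  have hsub : ∀ i j : X, i = j := by
    intro i j
    by_contra hij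
    set f : X → Equiv.Perm (Fin 3) := fun x =>
      if x = i then Equiv.swap 0 1 else if x = j then Equiv.swap 1 2 else 1 with hf
    have hfi : f i = Equiv.swap 0 1 := by rw [hf]; simp
    have hfj : f j = Equiv.swap 1 2 := by rw [hf]; simp [Ne.symm hij]
    have := congrArg (FreeGroup.lift f) (comm (.of i) (.of j))
    rw [map_mul, map_mul, FreeGroup.lift_apply_of, FreeGroup.lift_apply_of, hfi, hfj] at this
    exact absurd this (by decide)
  cases isEmpty_or_nonempty X with
  | inl h =>
    have htriv : ∀ g : FreeGroup X, g = 1 := by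
      intro g
      induction g using FreeGroup.induction_on with
      | C1 => rfl
      | of x => exact isEmptyElim x
      | inv_of x _ => exact isEmptyElim x
      | mul x y hx hy => rw [hx, hy, one_mul]
    have : ((Multiplicative.ofAdd 1, 1) : Multiplicative ℤ × Multiplicative ℤ) = 1 :=
      e.injective (by rw [htriv (e _), map_one])
    simpa using congrArg (fun p => Multiplicative.toAdd p.1) this
  | inr h =>
    obtain ⟨x₀⟩ := h
    have hzp : ∀ g : FreeGroup X, g ∈ Subgroup.zpowers (FreeGroup.of x₀) := by
      intro g
      have hle : Subgroup.closure (Set.range (FreeGroup.of : X → FreeGroup X)) ≤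
          Subgroup.zpowers (FreeGroup.of x₀) := by
        apply Subgroup.closure_le _ |>.mpr
        rintro _ ⟨x, rfl⟩
        rw [hsub x x₀]
        exact Subgroup.mem_zpowers _
      have : g ∈ Subgroup.closure (Set.range (FreeGroup.of : X → FreeGroup X)) := by
        rw [FreeGroup.closure_range_of]; trivial
      exact hle this
    apply not_cyclic_zz
    refine ⟨e.symm (FreeGroup.of x₀), fun x => ?_⟩
    obtain ⟨k, hk⟩ := Subgroup.mem_zpowers_iff.mp (hzp (e x))
    exact ⟨k, by rw [← map_zpow, hk, MulEquiv.symm_apply_apply]⟩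

open Multiplicative in
lemma raag_zz_subgroup {V : Type u} (Γ : SimpleGraph V) {u v : V} (huv : Γ.Adj u v) :
    ∃ H : Subgroup (RAAG Γ), Nonempty (H ≃* (Multiplicative ℤ × Multiplicative ℤ)) := by
  classical
  have hne : u ≠ v := huv.ne
  have hrel : FreeGroup.of u * FreeGroup.of v * (FreeGroup.of u)⁻¹ * (FreeGroup.of v)⁻¹ ∈
      raagRels Γ := ⟨u, v, huv, rfl⟩
  have hcomm : Commute (raagGen Γ u) (raagGen Γ v) := by
    have h1 : PresentedGroup.mk (raagRels Γ)
        (FreeGroup.of u * FreeGroup.of v * (FreeGroup.of u)⁻¹ * (FreeGroup.of v)⁻¹) = 1 :=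
      (QuotientGroup.eq_one_iff _).mpr (Subgroup.subset_normalClosure hrel)
    rw [map_mul, map_mul, map_mul, map_inv, map_inv] at h1
    exact commutatorElement_eq_one_iff_commute.mp h1
  set φ : Multiplicative ℤ × Multiplicative ℤ →* RAAG Γ :=
    MonoidHom.noncommCoprod (zpowersHom _ (raagGen Γ u)) (zpowersHom _ (raagGen Γ v))
      (fun m n => by simpa using hcomm.zpow_zpow m.toAdd n.toAdd) with hφ
  set f : V → Multiplicative ℤ × Multiplicative ℤ := fun x =>
    if x = u then (ofAdd 1, 1) else if x = v then (1, ofAdd 1) else 1 with hfdef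
  have hrels : ∀ r ∈ raagRels Γ, FreeGroup.lift f r = 1 := by
    rintro r ⟨a, b, hab, rfl⟩
    rw [map_mul, map_mul, map_mul, map_inv, map_inv, FreeGroup.lift_apply_of, FreeGroup.lift_apply_of]
    rw [mul_comm (f a) (f b)]
    group
  set ψ : RAAG Γ →* Multiplicative ℤ × Multiplicative ℤ := PresentedGroup.toGroup hrels with hψ
  have hψu : ψ (raagGen Γ u) = (ofAdd 1, 1) := by
    rw [hψ]
    show PresentedGroup.toGroup hrels (PresentedGroup.of u) = _
    rw [PresentedGroup.toGroup.of, hfdef]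
    simp
  have hψv : ψ (raagGen Γ v) = (1, ofAdd 1) := by
    rw [hψ]
    show PresentedGroup.toGroup hrels (PresentedGroup.of v) = _
    rw [PresentedGroup.toGroup.of, hfdef]
    simp [hne.symm]
  have hli : Function.LeftInverse ψ φ := by
    rintro ⟨x, y⟩
    rw [hφ]
    rw [MonoidHom.noncommCoprod_apply]
    rw [zpowersHom_apply, zpowersHom_apply, map_mul, map_zpow, map_zpow, hψu, hψv]
    ext
    · exact Multiplicative.toAdd.injective (by simp)
    · exact Multiplicative.toAdd.injective (by simp)
  have hinj : Function.Injective φ := hli.injective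
  exact ⟨φ.range, ⟨(MonoidHom.ofInjective hinj).symm⟩⟩

/-- `A(Γ)` is a free group iff `Γ` has no edge; moreover if `Γ` has at least one
edge then `A(Γ)` contains a subgroup isomorphic to `ℤ × ℤ`. -/
theorem raag_free_iff_no_edge {V : Type u} (Γ : SimpleGraph V) :
    ((∃ ι : Type u, Nonempty (RAAG Γ ≃* FreeGroup ι)) ↔ ∀ u v : V, ¬ Γ.Adj u v) ∧
    ((∃ u v : V, Γ.Adj u v) →
      ∃ H : Subgroup (RAAG Γ), Nonempty (H ≃* (Multiplicative ℤ × Multiplicative ℤ))) := by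
  constructor
  · constructor
    · rintro ⟨ι, ⟨e⟩⟩ a b hab
      obtain ⟨H, ⟨eH⟩⟩ := raag_zz_subgroup Γ hab
      have eK : H ≃* (H.map e.toMonoidHom) := e.subgroupMap H
      exact comm_free_contradiction
        (eH.symm.trans (eK.trans (IsFreeGroup.toFreeGroup (H.map e.toMonoidHom))))
    · intro h
      have hempty : raagRels Γ = ∅ := by
        ext r
        simp only [Set.mem_empty_iff_false, iff_false]
        rintro ⟨a, b, hab, _⟩
        exact h a b hab
      have hbot : Subgroup.normalClosure (raagRels Γ) = (⊥ : Subgroup (FreeGroup V)) := by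
        rw [hempty]
        refine le_antisymm (Subgroup.normalClosure_le_normal ?_) bot_le
        simp
      exact ⟨V, ⟨(QuotientGroup.quotientMulEquivOfEq hbot).trans (QuotientGroup.quotientBot)⟩⟩
  · rintro ⟨a, b, hab⟩
    exact raag_zz_subgroup Γ hab
end

section
/- Let G be a group acting on a set S, generated by a subset R ⊆ G. Assume each r ∈ R has an associated subset S_r ⊆ S such that: (1) if a, b ∈ R commute, then a^k · S_b ⊆ S_b for every nonzero integer k; (2) if a, b ∈ R do not commute, then a^k · S_b ⊆ S_a for every nonzero integer k; (3) there exists a point s₀ ∈ S not belonging to any S_r such that a^k · s₀ ∈ S_a for every a ∈ R and every nonzero integer k. Then the identity map R → R extends to a group isomorphism A(C_R) → G, where C_R is the commutation graph of R. -/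
/-!
Every element of a right-angled Artin group is the product of a reduced syllable word
`v₁ ^ n₁ ⋯ vₘ ^ nₘ`: all `nᵢ ≠ 0`, and between two syllables of the same generator there is one
of a generator neither equal nor adjacent to it. By induction on its length, a nonempty reduced
word whose first syllable is a power of `a` maps the base point `s₀` into `S_a`: if the second
syllable is a power of a neighbour `b`, the two syllables commute and powers of `b` preserve
`S_a`; otherwise the rest of the word lands in `S_b`, which powers of `a` map into `S_a`. As `s₀`
lies in no `S_a`, only the empty word fixes `s₀`, so the natural map `A(C_R) → G` is injective;
it is onto because `R` generates `G`.
-/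

universe u

/-- The commutation graph of a subset `R` of a group: vertices are the elements of
`R`, two distinct elements being adjacent iff they commute. -/
def commGraph (G : Type*) [Group G] (R : Set G) : SimpleGraph R where
  Adj a b := a ≠ b ∧ Commute (a : G) (b : G)
  symm := ⟨fun _ _ ⟨h1, h2⟩ => ⟨h1.symm, h2.symm⟩⟩
  loopless := ⟨fun _ ⟨h1, _⟩ => h1 rfl⟩

namespace RAAG

variable {V : Type*} {Γ : SimpleGraph V}

theorem commute_raagGen_of_adj {u v : V} (h : Γ.Adj u v) :
    Commute (raagGen Γ u) (raagGen Γ v) := by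
  have hrel : FreeGroup.of u * FreeGroup.of v * (FreeGroup.of u)⁻¹ * (FreeGroup.of v)⁻¹
      ∈ raagRels Γ := ⟨u, v, h, rfl⟩
  rw [← commutatorElement_eq_one_iff_commute]
  exact PresentedGroup.one_of_mem hrel

theorem commute_raagGen_of_eq_or_adj {u v : V} (h : u = v ∨ Γ.Adj u v) :
    Commute (raagGen Γ u) (raagGen Γ v) := by
  rcases h with rfl | h
  · exact Commute.refl _
  · exact commute_raagGen_of_adj h

variable (Γ) in
/-- A syllable `(v, n)` stands for `v ^ n`. -/
def syllableProd (L : List (V × ℤ)) : RAAG Γ :=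
  (L.map fun p => raagGen Γ p.1 ^ p.2).prod

@[simp]
theorem syllableProd_nil : syllableProd Γ [] = 1 := rfl

@[simp]
theorem syllableProd_cons (v : V) (n : ℤ) (L : List (V × ℤ)) :
    syllableProd Γ ((v, n) :: L) = raagGen Γ v ^ n * syllableProd Γ L := by
  simp [syllableProd]

@[simp]
theorem syllableProd_append (L M : List (V × ℤ)) :
    syllableProd Γ (L ++ M) = syllableProd Γ L * syllableProd Γ M := by
  simp [syllableProd]

theorem exists_syllableProd_eq (x : RAAG Γ) : ∃ L, syllableProd Γ L = x := by
  obtain ⟨w, rfl⟩ := PresentedGroup.mk_surjective _ x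
  induction w using FreeGroup.induction_on with
  | C1 => exact ⟨[], (map_one _).symm⟩
  | of v =>
    refine ⟨[(v, 1)], ?_⟩
    simp only [syllableProd_cons, syllableProd_nil, zpow_one, mul_one]
    rfl
  | inv_of v _ =>
    refine ⟨[(v, -1)], ?_⟩
    simp only [syllableProd_cons, syllableProd_nil, zpow_neg_one, mul_one, map_inv]
    rfl
  | mul x y hx hy =>
    obtain ⟨L, hL⟩ := hx
    obtain ⟨M, hM⟩ := hy
    exact ⟨L ++ M, by rw [syllableProd_append, hL, hM, map_mul]⟩

variable (Γ) in
structure IsReduced (L : List (V × ℤ)) : Prop where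
  ne_zero : ∀ p ∈ L, p.2 ≠ 0
  separated : ∀ L₁ a e L₂ f L₃, L = L₁ ++ (a, e) :: L₂ ++ (a, f) :: L₃ →
    ∃ p ∈ L₂, p.1 ≠ a ∧ ¬ Γ.Adj a p.1

theorem IsReduced.of_cons {p : V × ℤ} {L : List (V × ℤ)} (h : IsReduced Γ (p :: L)) :
    IsReduced Γ L where
  ne_zero q hq := h.ne_zero q (List.mem_cons_of_mem _ hq)
  separated L₁ a e L₂ f L₃ hL := h.separated (p :: L₁) a e L₂ f L₃ (by simp [hL])

theorem IsReduced.ne_of_cons_cons {a b : V} {e f : ℤ} {L : List (V × ℤ)}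
    (h : IsReduced Γ ((a, e) :: (b, f) :: L)) : a ≠ b := by
  rintro rfl
  obtain ⟨p, hp, -⟩ := h.separated [] a e [] f L rfl
  simp at hp

theorem IsReduced.drop_second {a b : V} {e f : ℤ} {L : List (V × ℤ)}
    (h : IsReduced Γ ((a, e) :: (b, f) :: L)) (hab : Γ.Adj a b) :
    IsReduced Γ ((a, e) :: L) where
  ne_zero p hp := h.ne_zero p (by simp only [List.mem_cons] at hp ⊢; tauto)
  separated L₁ c g L₂ g' L₃ hL := by
    cases L₁ with
    | nil =>
      simp only [List.nil_append, List.cons_append, List.cons.injEq, Prod.mk.injEq] at hL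
      obtain ⟨⟨rfl, rfl⟩, rfl⟩ := hL
      obtain ⟨p, hp, hpa, hpb⟩ := h.separated [] _ _ ((b, f) :: L₂) _ _ rfl
      rcases List.mem_cons.mp hp with rfl | hp
      · exact absurd hab hpb
      · exact ⟨p, hp, hpa, hpb⟩
    | cons q L₁ =>
      simp only [List.cons_append, List.cons.injEq] at hL
      obtain ⟨rfl, rfl⟩ := hL
      exact h.separated (_ :: (b, f) :: L₁) _ _ _ _ _ rfl

theorem syllableProd_merge (L₁ L₂ L₃ : List (V × ℤ)) (a : V) (e f : ℤ)
    (hL₂ : ∀ p ∈ L₂, p.1 ≠ a → Γ.Adj a p.1) :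
    syllableProd Γ (L₁ ++ (a, e) :: L₂ ++ (a, f) :: L₃) =
      syllableProd Γ (L₁ ++ L₂ ++ (a, e + f) :: L₃) := by
  have hcomm : Commute (raagGen Γ a ^ e) (syllableProd Γ L₂) := by
    refine Commute.list_prod_right _ _ fun x hx => ?_
    obtain ⟨p, hp, rfl⟩ := List.mem_map.mp hx
    refine (commute_raagGen_of_eq_or_adj ?_).zpow_zpow e p.2
    by_cases hpa : p.1 = a
    · exact .inl hpa.symm
    · exact .inr (hL₂ p hp hpa)
  simp only [syllableProd_append, syllableProd_cons, zpow_add, mul_assoc]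
  rw [hcomm.left_comm]

theorem exists_isReduced_syllableProd_eq (L : List (V × ℤ)) :
    ∃ L', IsReduced Γ L' ∧ syllableProd Γ L' = syllableProd Γ L := by
  induction hn : L.length using Nat.strong_induction_on generalizing L with
  | _ n ih =>
  by_cases hred : IsReduced Γ L
  · exact ⟨L, hred, rfl⟩
  by_cases hzero : ∀ p ∈ L, p.2 ≠ 0
  · obtain ⟨L₁, a, e, L₂, f, L₃, rfl, hL₂⟩ : ∃ L₁ a e L₂ f L₃,
        L = L₁ ++ (a, e) :: L₂ ++ (a, f) :: L₃ ∧ ∀ p ∈ L₂, p.1 ≠ a → Γ.Adj a p.1 := by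
      by_contra! h
      exact hred ⟨hzero, h⟩
    have hlt : (L₁ ++ L₂ ++ (a, e + f) :: L₃).length < n := by
      simp only [List.length_append, List.length_cons] at hn ⊢
      omega
    obtain ⟨L', hL', hprod⟩ := ih _ hlt _ rfl
    exact ⟨L', hL', hprod.trans (syllableProd_merge L₁ L₂ L₃ a e f hL₂).symm⟩
  · push Not at hzero
    obtain ⟨⟨v, k⟩, hp, rfl : k = 0⟩ := hzero
    obtain ⟨s, t, rfl⟩ := List.append_of_mem hp
    have hlt : (s ++ t).length < n := by
      simp only [List.length_append, List.length_cons] at hn ⊢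
      omega
    obtain ⟨L', hL', hprod⟩ := ih _ hlt _ rfl
    exact ⟨L', hL', by simpa using hprod⟩

theorem exists_isReduced_syllableProd (x : RAAG Γ) :
    ∃ L, IsReduced Γ L ∧ syllableProd Γ L = x := by
  obtain ⟨L, rfl⟩ := exists_syllableProd_eq x
  exact exists_isReduced_syllableProd_eq L

open Pointwise

section PingPong

variable {G S : Type*} [Group G] [MulAction G S] (φ : RAAG Γ →* G) (Sv : V → Set S) (s₀ : S)

theorem smul_mem_of_isReduced
    (hadj : ∀ a b, Γ.Adj a b → ∀ k : ℤ, k ≠ 0 → φ (raagGen Γ a) ^ k • Sv b ⊆ Sv b)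
    (hnonadj : ∀ a b, a ≠ b → ¬ Γ.Adj a b →
      ∀ k : ℤ, k ≠ 0 → φ (raagGen Γ a) ^ k • Sv b ⊆ Sv a)
    (hs₀ : ∀ a (k : ℤ), k ≠ 0 → φ (raagGen Γ a) ^ k • s₀ ∈ Sv a)
    {L : List (V × ℤ)} {a : V} {e : ℤ} (hred : IsReduced Γ ((a, e) :: L)) :
    φ (syllableProd Γ ((a, e) :: L)) • s₀ ∈ Sv a := by
  induction L generalizing a e with
  | nil =>
    simpa using hs₀ a e (hred.ne_zero _ List.mem_cons_self)
  | cons q L ih =>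
    obtain ⟨b, f⟩ := q
    by_cases hab : Γ.Adj a b
    · have hswap : syllableProd Γ ((a, e) :: (b, f) :: L) =
          raagGen Γ b ^ f * syllableProd Γ ((a, e) :: L) := by
        simp only [syllableProd_cons, ← mul_assoc,
          ((commute_raagGen_of_adj hab).zpow_zpow e f).eq]
      rw [hswap, map_mul, mul_smul, map_zpow]
      exact hadj b a hab.symm f (hred.of_cons.ne_zero _ List.mem_cons_self)
        (Set.smul_mem_smul_set (ih (hred.drop_second hab)))
    · rw [syllableProd_cons, map_mul, mul_smul, map_zpow]
      exact hnonadj a b hred.ne_of_cons_cons hab e (hred.ne_zero _ List.mem_cons_self)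
        (Set.smul_mem_smul_set (ih hred.of_cons))

theorem injective_of_pingPong
    (hadj : ∀ a b, Γ.Adj a b → ∀ k : ℤ, k ≠ 0 → φ (raagGen Γ a) ^ k • Sv b ⊆ Sv b)
    (hnonadj : ∀ a b, a ≠ b → ¬ Γ.Adj a b →
      ∀ k : ℤ, k ≠ 0 → φ (raagGen Γ a) ^ k • Sv b ⊆ Sv a)
    (hs₀ : ∀ a (k : ℤ), k ≠ 0 → φ (raagGen Γ a) ^ k • s₀ ∈ Sv a)
    (hs₀_notMem : ∀ v, s₀ ∉ Sv v) :
    Function.Injective φ := by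
  refine (injective_iff_map_eq_one φ).mpr fun x hx => ?_
  obtain ⟨L, hred, rfl⟩ := exists_isReduced_syllableProd x
  match L, hred with
  | [], _ => rfl
  | (a, e) :: L, hred =>
    have hmem := smul_mem_of_isReduced φ Sv s₀ hadj hnonadj hs₀ hred
    rw [hx, one_smul] at hmem
    exact absurd hmem (hs₀_notMem a)

end PingPong

end RAAG

section CommGraph

variable {G : Type*} [Group G] (R : Set G)

def commGraphLift : RAAG (commGraph G R) →* G :=
  PresentedGroup.toGroup (f := fun r : R => (r : G)) <| by
    rintro _ ⟨u, v, ⟨-, huv⟩, rfl⟩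
    simpa [commutatorElement_def] using commutatorElement_eq_one_iff_commute.mpr huv

@[simp]
theorem commGraphLift_raagGen (r : R) : commGraphLift R (raagGen (commGraph G R) r) = r :=
  PresentedGroup.toGroup.of _

theorem commGraphLift_surjective (hR : Subgroup.closure R = ⊤) :
    Function.Surjective (commGraphLift R) := by
  rw [← MonoidHom.range_eq_top, eq_top_iff, ← hR, Subgroup.closure_le]
  exact fun g hg => ⟨raagGen (commGraph G R) ⟨g, hg⟩, commGraphLift_raagGen R ⟨g, hg⟩⟩

end CommGraph

open Pointwise in
/-- The ping-pong lemma for right-angled Artin groups. -/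
theorem raag_ping_pong {G S : Type*} [Group G] [MulAction G S] (R : Set G)
    (hgen : Subgroup.closure R = ⊤) (Sr : R → Set S)
    (h1 : ∀ a b : R, Commute (a : G) (b : G) →
      ∀ k : ℤ, k ≠ 0 → ((a : G) ^ k) • Sr b ⊆ Sr b)
    (h2 : ∀ a b : R, ¬ Commute (a : G) (b : G) →
      ∀ k : ℤ, k ≠ 0 → ((a : G) ^ k) • Sr b ⊆ Sr a)
    (s₀ : S) (hs₀ : s₀ ∉ ⋃ r : R, Sr r)
    (h3 : ∀ (a : R) (k : ℤ), k ≠ 0 → ((a : G) ^ k) • s₀ ∈ Sr a) :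
    ∃ φ : RAAG (commGraph G R) ≃* G,
      ∀ r : R, φ (raagGen (commGraph G R) r) = (r : G) := by
  have hinj : Function.Injective (commGraphLift R) := by
    refine RAAG.injective_of_pingPong (commGraphLift R) Sr s₀ ?_ ?_ ?_ ?_
    · intro a b hab k hk
      simpa using h1 a b hab.2 k hk
    · intro a b hne hab k hk
      simpa using h2 a b (fun hc => hab ⟨hne, hc⟩) k hk
    · simpa using h3
    · simpa using hs₀
  exact ⟨MulEquiv.ofBijective _ ⟨hinj, commGraphLift_surjective R hgen⟩,
    commGraphLift_raagGen R⟩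
end

section
/- Let Γ be a simple graph and let M(Γ) be the Cayley graph of A(Γ) with respect to the generating set given by the images of the vertices of Γ. Then M(Γ) is a median graph: for any three vertices x₁, x₂, x₃ of M(Γ), there exists a unique vertex m such that d(x_i, x_j) = d(x_i, m) + d(m, x_j) for all i ≠ j, where d denotes the graph metric. -/
universe u

/-- The Cayley graph `M(Γ)` of `A(Γ)` with respect to the vertex generators. -/
def cayleyM {V : Type u} (Γ : SimpleGraph V) : SimpleGraph (RAAG Γ) where
  Adj x y := x ≠ y ∧ ∃ u : V, x⁻¹ * y = raagGen Γ u ∨ x⁻¹ * y = (raagGen Γ u)⁻¹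
  symm := by
    constructor
    rintro x y ⟨hne, u, h | h⟩
    · exact ⟨hne.symm, u, Or.inr (by rw [← h]; group)⟩
    · exact ⟨hne.symm, u, Or.inl (by rw [← inv_inv (raagGen Γ u), ← h]; group)⟩
  loopless := by constructor; rintro x ⟨hne, -⟩; exact hne rfl


namespace RaagMedian

attribute [local instance] Classical.propDecidable

variable {V : Type u}

/-- A letter: vertex plus sign. -/
abbrev Letter (V : Type u) := V × Bool

/-- Inverse of a letter. -/
def linv (a : Letter V) : Letter V := (a.1, !a.2)

@[simp] lemma linv_linv (a : Letter V) : linv (linv a) = a := by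
  cases a; simp [linv]

@[simp] lemma linv_fst (a : Letter V) : (linv a).1 = a.1 := rfl

lemma linv_ne (a : Letter V) : linv a ≠ a := by
  cases a with
  | mk v b => cases b <;> simp [linv]

abbrev Word (V : Type u) := List (Letter V)

variable (Γ : SimpleGraph V)

/-- One swap of two adjacent commuting letters. -/
inductive Sw : Word V → Word V → Prop
  | mk (x y : Word V) (p q : Letter V) (h : Γ.Adj p.1 q.1) :
      Sw (x ++ p :: q :: y) (x ++ q :: p :: y)

/-- One cancellation of an adjacent inverse pair. -/
inductive Dl : Word V → Word V → Prop
  | mk (x y : Word V) (a : Letter V) : Dl (x ++ a :: linv a :: y) (x ++ y)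

/-- One step of the rewriting system. -/
def Stp (w w' : Word V) : Prop := Sw Γ w w' ∨ Dl w w'

/-- Swap equivalence (trace equivalence). -/
def SE (w w' : Word V) : Prop := Relation.EqvGen (Sw Γ) w w'

/-- Full word equivalence. -/
def WE (w w' : Word V) : Prop := Relation.EqvGen (Stp Γ) w w'

variable {Γ}

lemma Sw.symm' {w w' : Word V} (h : Sw Γ w w') : Sw Γ w' w := by
  cases h with
  | mk x y p q h => exact Sw.mk x y q p h.symm

lemma SE.refl (w : Word V) : SE Γ w w := Relation.EqvGen.refl w

lemma SE.symm {w w' : Word V} (h : SE Γ w w') : SE Γ w' w := Relation.EqvGen.symm _ _ h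

lemma SE.trans {w₁ w₂ w₃ : Word V} (h : SE Γ w₁ w₂) (h' : SE Γ w₂ w₃) : SE Γ w₁ w₃ :=
  Relation.EqvGen.trans _ _ _ h h'

lemma SE.of_sw {w w' : Word V} (h : Sw Γ w w') : SE Γ w w' := Relation.EqvGen.rel _ _ h

lemma Sw.append_left {w w' : Word V} (u : Word V) (h : Sw Γ w w') :
    Sw Γ (u ++ w) (u ++ w') := by
  cases h with
  | mk x y p q h =>
      have := Sw.mk (Γ := Γ) (u ++ x) y p q h
      simpa using this

lemma Sw.append_right {w w' : Word V} (u : Word V) (h : Sw Γ w w') :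
    Sw Γ (w ++ u) (w' ++ u) := by
  cases h with
  | mk x y p q h =>
      have := Sw.mk (Γ := Γ) x (y ++ u) p q h
      simpa using this

lemma SE.append_left {w w' : Word V} (u : Word V) (h : SE Γ w w') :
    SE Γ (u ++ w) (u ++ w') := by
  induction h with
  | rel a b hab => exact SE.of_sw (hab.append_left u)
  | refl a => exact SE.refl _
  | symm a b _ ih => exact ih.symm
  | trans a b c _ _ ih₁ ih₂ => exact ih₁.trans ih₂

lemma SE.append_right {w w' : Word V} (u : Word V) (h : SE Γ w w') :
    SE Γ (w ++ u) (w' ++ u) := by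
  induction h with
  | rel a b hab => exact SE.of_sw (hab.append_right u)
  | refl a => exact SE.refl _
  | symm a b _ ih => exact ih.symm
  | trans a b c _ _ ih₁ ih₂ => exact ih₁.trans ih₂

lemma SE.cons {w w' : Word V} (a : Letter V) (h : SE Γ w w') :
    SE Γ (a :: w) (a :: w') := by
  simpa using h.append_left [a]

lemma SE.length_eq {w w' : Word V} (h : SE Γ w w') : w.length = w'.length := by
  induction h with
  | rel a b hab => cases hab with | mk x y p q h => simp
  | refl a => rfl
  | symm a b _ ih => exact ih.symm
  | trans a b c _ _ ih₁ ih₂ => exact ih₁.trans ih₂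

/-- Pull a letter to the front across a block of letters all adjacent to it. -/
lemma pull_front {y : Word V} {a : Letter V} (h : ∀ b ∈ y, Γ.Adj b.1 a.1) (z : Word V) :
    SE Γ (y ++ a :: z) (a :: (y ++ z)) := by
  induction y with
  | nil => exact SE.refl _
  | cons c y ih =>
      have h1 : SE Γ (c :: (y ++ a :: z)) (c :: (a :: (y ++ z))) :=
        (ih (fun b hb => h b (List.mem_cons_of_mem _ hb))).cons c
      have h2 : Sw Γ ([] ++ c :: a :: (y ++ z)) ([] ++ a :: c :: (y ++ z)) :=
        Sw.mk [] (y ++ z) c a (h c (List.mem_cons_self))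
      exact h1.trans (by simpa using SE.of_sw h2)

/-- Projection to the letters with vertex `u` or `v`. -/
noncomputable def proj (u v : V) : Word V → Word V
  | [] => []
  | a :: w => if a.1 = u ∨ a.1 = v then a :: proj u v w else proj u v w

@[simp] lemma proj_nil (u v : V) : proj u v ([] : Word V) = [] := rfl

lemma proj_cons (u v : V) (a : Letter V) (w : Word V) :
    proj u v (a :: w) = if a.1 = u ∨ a.1 = v then a :: proj u v w else proj u v w := by
  simp [proj]

lemma proj_cons_pos {u v : V} {a : Letter V} (h : a.1 = u ∨ a.1 = v) (w : Word V) :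
    proj u v (a :: w) = a :: proj u v w := by rw [proj_cons, if_pos h]

lemma proj_cons_neg {u v : V} {a : Letter V} (h : ¬(a.1 = u ∨ a.1 = v)) (w : Word V) :
    proj u v (a :: w) = proj u v w := by rw [proj_cons, if_neg h]

lemma proj_append (u v : V) (w₁ w₂ : Word V) :
    proj u v (w₁ ++ w₂) = proj u v w₁ ++ proj u v w₂ := by
  induction w₁ with
  | nil => simp
  | cons a w ih =>
      by_cases h : a.1 = u ∨ a.1 = v
      · simp [proj_cons_pos h, ih]
      · simp [proj_cons_neg h, ih]

lemma mem_of_mem_proj {u v : V} {a : Letter V} {w : Word V} (h : a ∈ proj u v w) : a ∈ w := by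
  induction w with
  | nil => simp [proj] at h
  | cons c w ih =>
      by_cases hc : c.1 = u ∨ c.1 = v
      · rw [proj_cons_pos hc] at h
        rcases List.mem_cons.1 h with h | h
        · exact h ▸ List.mem_cons_self
        · exact List.mem_cons_of_mem _ (ih h)
      · rw [proj_cons_neg hc] at h
        exact List.mem_cons_of_mem _ (ih h)

lemma vertex_of_mem_proj {u v : V} {a : Letter V} {w : Word V} (h : a ∈ proj u v w) :
    a.1 = u ∨ a.1 = v := by
  induction w with
  | nil => simp [proj] at h
  | cons c w ih =>
      by_cases hc : c.1 = u ∨ c.1 = v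
      · rw [proj_cons_pos hc] at h
        rcases List.mem_cons.1 h with h | h
        · exact h ▸ hc
        · exact ih h
      · rw [proj_cons_neg hc] at h
        exact ih h

lemma proj_sw {u v : V} (huv : ¬Γ.Adj u v) {w w' : Word V} (h : Sw Γ w w') :
    proj u v w = proj u v w' := by
  cases h with
  | mk x y p q hpq =>
      have hne : ¬((p.1 = u ∨ p.1 = v) ∧ (q.1 = u ∨ q.1 = v)) := by
        rintro ⟨hp | hp, hq | hq⟩
        · exact Γ.loopless.irrefl u (by rw [hp, hq] at hpq; exact hpq)
        · exact huv (by rw [hp, hq] at hpq; exact hpq)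
        · exact huv (by rw [hp, hq] at hpq; exact hpq.symm)
        · exact Γ.loopless.irrefl v (by rw [hp, hq] at hpq; exact hpq)
      rw [proj_append, proj_append]
      congr 1
      by_cases hp : p.1 = u ∨ p.1 = v
      · have hq : ¬(q.1 = u ∨ q.1 = v) := fun hq => hne ⟨hp, hq⟩
        rw [proj_cons_pos hp, proj_cons_neg hq, proj_cons_neg hq, proj_cons_pos hp]
      · by_cases hq : q.1 = u ∨ q.1 = v
        · rw [proj_cons_neg hp, proj_cons_pos hq, proj_cons_pos hq, proj_cons_neg hp]
        · rw [proj_cons_neg hp, proj_cons_neg hq, proj_cons_neg hq, proj_cons_neg hp]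

lemma proj_se {u v : V} (huv : ¬Γ.Adj u v) {w w' : Word V} (h : SE Γ w w') :
    proj u v w = proj u v w' := by
  induction h with
  | rel a b hab => exact proj_sw huv hab
  | refl a => rfl
  | symm a b _ ih => exact ih.symm
  | trans a b c _ _ ih₁ ih₂ => exact ih₁.trans ih₂

lemma proj_eq_cons_split {u v : V} {t : Word V} {b : Letter V} {L : Word V}
    (h : proj u v t = b :: L) :
    ∃ t₁ t₂, t = t₁ ++ b :: t₂ ∧ (∀ c ∈ t₁, ¬(c.1 = u ∨ c.1 = v)) ∧ proj u v t₂ = L := by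
  induction t with
  | nil => simp at h
  | cons c t ih =>
      by_cases hc : c.1 = u ∨ c.1 = v
      · rw [proj_cons_pos hc] at h
        injection h with h1 h2
        subst h1
        exact ⟨[], t, rfl, by simp, h2⟩
      · rw [proj_cons_neg hc] at h
        obtain ⟨t₁, t₂, rfl, h₁, h₂⟩ := ih h
        exact ⟨c :: t₁, t₂, rfl, by
          intro d hd
          rcases List.mem_cons.1 hd with rfl | hd
          · exact hc
          · exact h₁ d hd, h₂⟩

lemma mem_proj_of_mem {u v : V} {a : Letter V} {w : Word V} (hm : a ∈ w)
    (h : a.1 = u ∨ a.1 = v) : a ∈ proj u v w := by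
  induction w with
  | nil => simp at hm
  | cons c w ih =>
      rcases List.mem_cons.1 hm with rfl | hm
      · rw [proj_cons_pos h]; exact List.mem_cons_self
      · by_cases hc : c.1 = u ∨ c.1 = v
        · rw [proj_cons_pos hc]; exact List.mem_cons_of_mem _ (ih hm)
        · rw [proj_cons_neg hc]; exact ih hm

/-- The key structural lemma: if all projections of `w` agree with those of `a :: t`,
then `a` can be pulled out of `w` with an adjacent prefix. -/
lemma pull_plus : ∀ (w : Word V) (a : Letter V) (t : Word V),
    (∀ u v : V, ¬Γ.Adj u v → proj u v w = proj u v (a :: t)) →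
    ∃ y z, w = y ++ a :: z ∧ (∀ b ∈ y, Γ.Adj b.1 a.1) ∧
      (∀ u v : V, ¬Γ.Adj u v → proj u v (y ++ z) = proj u v t) := by
  intro w
  induction w with
  | nil =>
      intro a t h
      have := h a.1 a.1 (Γ.loopless.irrefl a.1)
      rw [proj_cons_pos (Or.inl rfl)] at this
      simp at this
  | cons b r ih =>
      intro a t h
      by_cases hba : b = a
      · subst hba
        refine ⟨[], r, rfl, by simp, fun u v huv => ?_⟩
        have := h u v huv
        by_cases hb : b.1 = u ∨ b.1 = v
        · rw [proj_cons_pos hb, proj_cons_pos hb] at this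
          simpa using List.tail_eq_of_cons_eq this
        · rw [proj_cons_neg hb, proj_cons_neg hb] at this
          simpa using this
      · -- b ≠ a
        have hadj : Γ.Adj b.1 a.1 := by
          by_contra hn
          have := h b.1 a.1 hn
          rw [proj_cons_pos (Or.inl rfl), proj_cons_pos (Or.inr rfl)] at this
          exact hba (List.head_eq_of_cons_eq this)
        have hba1 : b.1 ≠ a.1 := hadj.ne
        -- locate b inside t
        have hbt : proj b.1 b.1 t = b :: proj b.1 b.1 r := by
          have := h b.1 b.1 (Γ.loopless.irrefl b.1)
          rw [proj_cons_pos (Or.inl rfl), proj_cons_neg (by simp [Ne.symm hba1])] at this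
          exact this.symm
        obtain ⟨t₁, t₂, rfl, ht₁v, ht₂⟩ := proj_eq_cons_split hbt
        have ht₁v' : ∀ c ∈ t₁, c.1 ≠ b.1 := fun c hc => by
          have := ht₁v c hc; simpa using fun h => this (Or.inl h)
        -- all of t₁ is adjacent to b
        have ht₁ : ∀ c ∈ t₁, Γ.Adj c.1 b.1 := by
          intro c hc
          by_contra hn
          have heq := h c.1 b.1 hn
          rw [proj_cons_pos (Or.inr rfl)] at heq
          by_cases ha : a.1 = c.1 ∨ a.1 = b.1
          · rw [proj_cons_pos ha] at heq
            exact hba (List.head_eq_of_cons_eq heq)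
          · rw [proj_cons_neg ha, proj_append] at heq
            rcases hpt : proj c.1 b.1 t₁ with _ | ⟨d, l⟩
            · have : c ∈ proj c.1 b.1 t₁ := mem_proj_of_mem hc (Or.inl rfl)
              rw [hpt] at this; simp at this
            · rw [hpt] at heq
              have hdb : d = b := by
                have : (b :: proj c.1 b.1 r) = d :: (l ++ proj c.1 b.1 (b :: t₂)) := by
                  simpa using heq
                exact (List.head_eq_of_cons_eq this).symm ▸ rfl
              have : d ∈ t₁ := mem_of_mem_proj (hpt ▸ (List.mem_cons_self (a := d) (l := l)))
              exact ht₁v' d this (by rw [hdb])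
        -- the rewritten target
        have hse : SE Γ (a :: (t₁ ++ b :: t₂)) (b :: a :: (t₁ ++ t₂)) := by
          have h1 : SE Γ (t₁ ++ b :: t₂) (b :: (t₁ ++ t₂)) := pull_front ht₁ t₂
          have h2 : SE Γ (a :: (t₁ ++ b :: t₂)) (a :: b :: (t₁ ++ t₂)) := h1.cons a
          have h3 : Sw Γ ([] ++ a :: b :: (t₁ ++ t₂)) ([] ++ b :: a :: (t₁ ++ t₂)) :=
            Sw.mk [] (t₁ ++ t₂) a b hadj.symm
          exact h2.trans (by simpa using SE.of_sw h3)
        have hr : ∀ u v : V, ¬Γ.Adj u v → proj u v r = proj u v (a :: (t₁ ++ t₂)) := by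
          intro u v huv
          have heq := (h u v huv).trans (proj_se huv hse)
          by_cases hb : b.1 = u ∨ b.1 = v
          · rw [proj_cons_pos hb, proj_cons_pos hb] at heq
            exact List.tail_eq_of_cons_eq heq
          · rw [proj_cons_neg hb, proj_cons_neg hb] at heq
            exact heq
        obtain ⟨y', z', hre, hy', hproj'⟩ := ih a (t₁ ++ t₂) hr
        refine ⟨b :: y', z', by rw [hre]; rfl, ?_, ?_⟩
        · intro c hc
          rcases List.mem_cons.1 hc with rfl | hc
          · exact hadj
          · exact hy' c hc
        · intro u v huv
          have hrhs : proj u v (t₁ ++ b :: t₂) = proj u v (b :: (t₁ ++ t₂)) :=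
            proj_se huv (pull_front ht₁ t₂)
          rw [hrhs]
          show proj u v (b :: (y' ++ z')) = _
          by_cases hb : b.1 = u ∨ b.1 = v
          · rw [proj_cons_pos hb, proj_cons_pos hb, hproj' u v huv]
          · rw [proj_cons_neg hb, proj_cons_neg hb, hproj' u v huv]

/-- Projection criterion for swap equivalence. -/
lemma se_of_proj : ∀ (t w : Word V), (∀ u v : V, ¬Γ.Adj u v → proj u v w = proj u v t) →
    SE Γ w t := by
  intro t
  induction t with
  | nil =>
      intro w h
      cases w with
      | nil => exact SE.refl _
      | cons c r =>
          have := h c.1 c.1 (Γ.loopless.irrefl c.1)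
          rw [proj_cons_pos (Or.inl rfl)] at this
          simp at this
  | cons a t' ih =>
      intro w h
      obtain ⟨y, z, hw, hy, hproj⟩ := pull_plus w a t' h
      subst hw
      have h1 : SE Γ (y ++ a :: z) (a :: (y ++ z)) := pull_front hy z
      exact h1.trans ((ih (y ++ z) hproj).cons a)

lemma se_iff_proj {w t : Word V} :
    SE Γ w t ↔ ∀ u v : V, ¬Γ.Adj u v → proj u v w = proj u v t :=
  ⟨fun h u v huv => proj_se huv h, fun h => se_of_proj t w h⟩

/-- Left cancellation for trace equivalence. -/
lemma se_cancel {a : Letter V} {s t : Word V} (h : SE Γ (a :: s) (a :: t)) : SE Γ s t := by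
  rw [se_iff_proj] at h ⊢
  intro u v huv
  have := h u v huv
  by_cases ha : a.1 = u ∨ a.1 = v
  · rw [proj_cons_pos ha, proj_cons_pos ha] at this
    exact List.tail_eq_of_cons_eq this
  · rw [proj_cons_neg ha, proj_cons_neg ha] at this
    exact this

/-- Exchanging distinct heads of trace-equivalent words. -/
lemma head_exchange {a b : Letter V} {s t : Word V} (hab : a ≠ b)
    (h : SE Γ (a :: t) (b :: s)) :
    Γ.Adj a.1 b.1 ∧ ∃ s', SE Γ t (b :: s') ∧ SE Γ s (a :: s') := by
  have hproj : ∀ u v : V, ¬Γ.Adj u v → proj u v (a :: t) = proj u v (b :: s) :=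
    fun u v huv => proj_se huv h
  obtain ⟨y, z, hdec, hy, hproj'⟩ := pull_plus (a :: t) b s hproj
  cases y with
  | nil => simp at hdec; exact absurd hdec.1 hab
  | cons c y' =>
      have hca : c = a := by
        have : c :: (y' ++ b :: z) = a :: t := by simpa using hdec.symm
        exact List.head_eq_of_cons_eq this
      subst hca
      have ht : t = y' ++ b :: z := by simpa using hdec
      have hadj : Γ.Adj c.1 b.1 := hy c (List.mem_cons_self)
      refine ⟨hadj, y' ++ z, ?_, ?_⟩
      · rw [ht]
        exact pull_front (fun d hd => hy d (List.mem_cons_of_mem _ hd)) z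
      · exact se_of_proj _ _ (fun u v huv => (hproj' u v huv).symm)
/-! ### Reducibility -/

variable (Γ) in
/-- A word is reducible if it contains a cancellable pair. -/
def Redu (w : Word V) : Prop :=
  ∃ (x y z : Word V) (c : Letter V), w = x ++ c :: y ++ linv c :: z ∧ ∀ b ∈ y, Γ.Adj b.1 c.1

variable (Γ) in
/-- Irreducible (locally reduced) words. -/
def Irr (w : Word V) : Prop := ¬ Redu Γ w

lemma redu_cons {w : Word V} (d : Letter V) (h : Redu Γ w) : Redu Γ (d :: w) := by
  obtain ⟨x, y, z, c, rfl, hy⟩ := h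
  exact ⟨d :: x, y, z, c, rfl, hy⟩

lemma irr_tail {w : Word V} {a : Letter V} (h : Irr Γ (a :: w)) : Irr Γ w :=
  fun hr => h (redu_cons a hr)

lemma irr_nil : Irr Γ ([] : Word V) := by
  rintro ⟨x, y, z, c, h, -⟩
  simp at h

lemma irr_single (a : Letter V) : Irr Γ [a] := by
  rintro ⟨x, y, z, c, h, -⟩
  have := congrArg List.length h
  simp at this
  omega

lemma redu_peel {b : Letter V} {s : Word V} (h : Redu Γ (b :: s)) :
    (∃ y z, s = y ++ linv b :: z ∧ ∀ c ∈ y, Γ.Adj c.1 b.1) ∨ Redu Γ s := by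
  obtain ⟨x, y, z, c, hdec, hy⟩ := h
  cases x with
  | nil =>
      left
      injection hdec with h1 h2
      subst h1
      exact ⟨y, z, h2, hy⟩
  | cons d x' =>
      right
      injection hdec with h1 h2
      exact ⟨x', y, z, c, h2, hy⟩

/-- Inserting a letter whose vertex is adjacent to everything in `y` preserves reducibility. -/
lemma redu_insert {u : V} {e : Letter V} (he : e.1 = u) :
    ∀ (y z : Word V), Redu Γ (y ++ z) → (∀ b ∈ y, Γ.Adj b.1 u) → Redu Γ (y ++ e :: z) := by
  intro y
  induction y with
  | nil => intro z h _; exact redu_cons e h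
  | cons b y₁ ih =>
      intro z h hadj
      have hb : Γ.Adj b.1 u := hadj b (List.mem_cons_self)
      rcases redu_peel (by simpa using h) with ⟨y'', z'', hs, hy''⟩ | hred
      · -- pattern starts at b : b :: (y₁ ++ z) with y₁ ++ z = y'' ++ linv b :: z''
        rcases List.append_eq_append_iff.1 hs with ⟨m, hm1, hm2⟩ | ⟨m, hm1, hm2⟩
        · -- y'' = y₁ ++ m, z = m ++ linv b :: z''
          subst hm1
          refine ⟨[], y₁ ++ e :: m, z'', b, by simp [hm2], ?_⟩
          intro c hc
          simp only [List.mem_append, List.mem_cons] at hc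
          rcases hc with hc | rfl | hc
          · exact hy'' c (List.mem_append_left _ hc)
          · rw [he]; exact hb.symm
          · exact hy'' c (List.mem_append_right _ hc)
        · -- y₁ = y'' ++ m, linv b :: z'' = m ++ z
          cases m with
          | nil =>
              simp only [List.nil_append] at hm2
              subst hm1
              refine ⟨[], y'' ++ [e], z'', b, by simp [← hm2], ?_⟩
              intro c hc
              simp only [List.mem_append, List.mem_cons] at hc
              rcases hc with hc | hc
              · exact hy'' c hc
              · simp at hc; subst hc; rw [he]; exact hb.symm
          | cons d m' =>
              injection hm2 with h1 h2
              subst h1 hm1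
              refine ⟨[], y'', m' ++ e :: z, b, by simp [h2], hy''⟩
      · exact redu_cons b (ih z hred (fun c hc => hadj c (List.mem_cons_of_mem _ hc)))

/-! ### The star filter and invariance of reducibility -/

variable (Γ)

/-- Filter keeping letters at `v` or not adjacent to `v` (the potential blockers). -/
noncomputable def fstar (v : V) : Word V → Word V
  | [] => []
  | a :: w => if a.1 = v ∨ ¬Γ.Adj a.1 v then a :: fstar v w else fstar v w

lemma fstar_cons_pos {v : V} {a : Letter V} (h : a.1 = v ∨ ¬Γ.Adj a.1 v) (w : Word V) :
    fstar Γ v (a :: w) = a :: fstar Γ v w := by rw [fstar, if_pos h]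

lemma fstar_cons_neg {v : V} {a : Letter V} (h : ¬(a.1 = v ∨ ¬Γ.Adj a.1 v)) (w : Word V) :
    fstar Γ v (a :: w) = fstar Γ v w := by rw [fstar, if_neg h]

variable {Γ}

lemma fstar_append (v : V) (w₁ w₂ : Word V) :
    fstar Γ v (w₁ ++ w₂) = fstar Γ v w₁ ++ fstar Γ v w₂ := by
  induction w₁ with
  | nil => simp [fstar]
  | cons a w ih =>
      by_cases h : a.1 = v ∨ ¬Γ.Adj a.1 v
      · rw [List.cons_append, fstar_cons_pos Γ h, fstar_cons_pos Γ h, ih]; rfl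
      · rw [List.cons_append, fstar_cons_neg Γ h, fstar_cons_neg Γ h, ih]

lemma fstar_eq_cons_split {v : V} {t : Word V} {b : Letter V} {L : Word V}
    (h : fstar Γ v t = b :: L) :
    ∃ t₁ t₂, t = t₁ ++ b :: t₂ ∧ (∀ c ∈ t₁, ¬(c.1 = v ∨ ¬Γ.Adj c.1 v)) ∧ fstar Γ v t₂ = L := by
  induction t with
  | nil => simp [fstar] at h
  | cons c t ih =>
      by_cases hc : c.1 = v ∨ ¬Γ.Adj c.1 v
      · rw [fstar_cons_pos Γ hc] at h
        injection h with h1 h2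
        subst h1
        exact ⟨[], t, rfl, by simp, h2⟩
      · rw [fstar_cons_neg Γ hc] at h
        obtain ⟨t₁, t₂, rfl, h₁, h₂⟩ := ih h
        exact ⟨c :: t₁, t₂, rfl, by
          intro d hd
          rcases List.mem_cons.1 hd with rfl | hd
          · exact hc
          · exact h₁ d hd, h₂⟩

lemma fstar_eq_append_cons_split {v : V} {t : Word V} {b : Letter V} {X L : Word V}
    (h : fstar Γ v t = X ++ b :: L) :
    ∃ t₁ t₂, t = t₁ ++ b :: t₂ ∧ fstar Γ v t₁ = X ∧ fstar Γ v t₂ = L := by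
  induction t generalizing X with
  | nil => simp [fstar] at h
  | cons c t ih =>
      by_cases hc : c.1 = v ∨ ¬Γ.Adj c.1 v
      · rw [fstar_cons_pos Γ hc] at h
        cases X with
        | nil =>
            injection h with h1 h2
            subst h1
            exact ⟨[], t, rfl, rfl, h2⟩
        | cons d X' =>
            injection h with h1 h2
            subst h1
            obtain ⟨t₁, t₂, rfl, hX, hL⟩ := ih h2
            exact ⟨c :: t₁, t₂, rfl, by rw [fstar_cons_pos Γ hc, hX], hL⟩
      · rw [fstar_cons_neg Γ hc] at h
        obtain ⟨t₁, t₂, rfl, hX, hL⟩ := ih h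
        exact ⟨c :: t₁, t₂, rfl, by rw [fstar_cons_neg Γ hc, hX], hL⟩

/-- Existence of a consecutive cancelling pair at vertex `v`. -/
def HasCC (v : V) (b : Bool) (L : Word V) : Prop :=
  ∃ X Y, L = X ++ (v, b) :: (v, !b) :: Y

lemma redu_iff_hascc {w : Word V} :
    Redu Γ w ↔ ∃ v b, HasCC v b (fstar Γ v w) := by
  constructor
  · rintro ⟨x, y, z, c, rfl, hy⟩
    refine ⟨c.1, c.2, fstar Γ c.1 x, fstar Γ c.1 z, ?_⟩
    have hy0 : fstar Γ c.1 y = [] := by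
      induction y with
      | nil => rfl
      | cons d y' ih =>
          have hd : Γ.Adj d.1 c.1 := hy d (List.mem_cons_self)
          rw [fstar_cons_neg Γ (by push_neg; exact ⟨fun h => Γ.loopless.irrefl c.1 (h ▸ hd), hd⟩)]
          exact ih (fun b hb => hy b (List.mem_cons_of_mem _ hb))
    have h1 : fstar Γ c.1 (x ++ c :: y ++ linv c :: z)
        = fstar Γ c.1 x ++ c :: (fstar Γ c.1 y ++ linv c :: fstar Γ c.1 z) := by
      rw [show x ++ c :: y ++ linv c :: z = x ++ (c :: (y ++ (linv c :: z))) by simp, fstar_append,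
        fstar_cons_pos Γ (Or.inl rfl), fstar_append, fstar_cons_pos Γ (v := c.1) (a := linv c) (Or.inl rfl)]
    rw [h1, hy0]
    simp [linv]
  · rintro ⟨v, b, X, Y, hL⟩
    obtain ⟨x, t₂, rfl, -, h₂⟩ := fstar_eq_append_cons_split hL
    obtain ⟨y, z, rfl, h₁', h₂'⟩ := fstar_eq_cons_split h₂
    refine ⟨x, y, z, (v, b), by simp [linv], ?_⟩
    intro d hd
    have h := h₁' d hd
    push_neg at h
    exact h.2
lemma hascc_swapmid {v : V} {b : Bool} {p q : Letter V} (hp : p.1 ≠ v) (hq : q.1 ≠ v)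
    {A B : Word V} (h : HasCC v b (A ++ p :: q :: B)) : HasCC v b (A ++ q :: p :: B) := by
  obtain ⟨X, Y, hXY⟩ := h
  rcases List.append_eq_append_iff.1 hXY.symm with ⟨a', ha1, ha2⟩ | ⟨c', hc1, hc2⟩
  · -- A = X ++ a', (v,b) :: (v,!b) :: Y = a' ++ p :: q :: B
    cases a' with
    | nil =>
        rw [List.nil_append] at ha2
        injection ha2 with h1 h2
        exact absurd (congrArg Prod.fst h1).symm hp
    | cons e a'' =>
        rw [List.cons_append] at ha2
        injection ha2 with h1 h2
        subst h1
        cases a'' with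
        | nil =>
            rw [List.nil_append] at h2
            injection h2 with h3 h4
            exact absurd (congrArg Prod.fst h3).symm hp
        | cons f a''' =>
            rw [List.cons_append] at h2
            injection h2 with h3 h4
            subst h3
            refine ⟨X, a''' ++ q :: p :: B, ?_⟩
            rw [ha1]
            simp
  · -- X = A ++ c', p :: q :: B = c' ++ (v,b) :: (v,!b) :: Y
    cases c' with
    | nil =>
        rw [List.nil_append] at hc2
        injection hc2 with h1 h2
        exact absurd (congrArg Prod.fst h1) hp
    | cons e c'' =>
        rw [List.cons_append] at hc2
        injection hc2 with h1 h2
        subst h1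
        cases c'' with
        | nil =>
            rw [List.nil_append] at h2
            injection h2 with h3 h4
            exact absurd (congrArg Prod.fst h3) hq
        | cons f c''' =>
            rw [List.cons_append] at h2
            injection h2 with h3 h4
            subst h3
            refine ⟨A ++ q :: p :: c''', Y, ?_⟩
            rw [hc1] at hXY
            simp [h4]

lemma fstar_sw {v : V} {w w' : Word V} (h : Sw Γ w w') :
    fstar Γ v w = fstar Γ v w' ∨
      ∃ (A B : Word V) (p q : Letter V), p.1 ≠ v ∧ q.1 ≠ v ∧
        fstar Γ v w = A ++ p :: q :: B ∧ fstar Γ v w' = A ++ q :: p :: B := by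
  cases h with
  | mk x y p q hpq =>
      by_cases hp : p.1 = v ∨ ¬Γ.Adj p.1 v
      · by_cases hq : q.1 = v ∨ ¬Γ.Adj q.1 v
        · -- both pass: vertices differ from v
          have hpv : p.1 ≠ v := by
            intro hpv
            rcases hq with hqv | hqn
            · exact Γ.loopless.irrefl v (by rw [hpv, hqv] at hpq; exact hpq)
            · exact hqn (by rw [hpv] at hpq; exact hpq.symm)
          have hqv : q.1 ≠ v := by
            intro hqv
            rcases hp with hpv' | hpn
            · exact Γ.loopless.irrefl v (by rw [hpv', hqv] at hpq; exact hpq)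
            · exact hpn (by rw [hqv] at hpq; exact hpq)
          refine Or.inr ⟨fstar Γ v x, fstar Γ v y, p, q, hpv, hqv, ?_, ?_⟩
          · rw [fstar_append, fstar_cons_pos Γ hp, fstar_cons_pos Γ hq]
          · rw [fstar_append, fstar_cons_pos Γ hq, fstar_cons_pos Γ hp]
        · left
          rw [fstar_append, fstar_append, fstar_cons_pos Γ hp, fstar_cons_neg Γ hq,
            fstar_cons_neg Γ hq, fstar_cons_pos Γ hp]
      · by_cases hq : q.1 = v ∨ ¬Γ.Adj q.1 v
        · left
          rw [fstar_append, fstar_append, fstar_cons_neg Γ hp, fstar_cons_pos Γ hq,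
            fstar_cons_pos Γ hq, fstar_cons_neg Γ hp]
        · left
          rw [fstar_append, fstar_append, fstar_cons_neg Γ hp, fstar_cons_neg Γ hq,
            fstar_cons_neg Γ hq, fstar_cons_neg Γ hp]

lemma redu_sw {w w' : Word V} (h : Sw Γ w w') (hr : Redu Γ w) : Redu Γ w' := by
  rw [redu_iff_hascc] at hr ⊢
  obtain ⟨v, b, hcc⟩ := hr
  rcases fstar_sw (v := v) h with heq | ⟨A, B, p, q, hp, hq, h1, h2⟩
  · exact ⟨v, b, heq ▸ hcc⟩
  · exact ⟨v, b, h2 ▸ hascc_swapmid hp hq (h1 ▸ hcc)⟩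

lemma redu_se {w w' : Word V} (h : SE Γ w w') : Redu Γ w ↔ Redu Γ w' := by
  induction h with
  | rel a b hab => exact ⟨redu_sw hab, redu_sw hab.symm'⟩
  | refl a => exact Iff.rfl
  | symm a b _ ih => exact ih.symm
  | trans a b c _ _ ih₁ ih₂ => exact ih₁.trans ih₂

lemma irr_se {w w' : Word V} (h : SE Γ w w') : Irr Γ w ↔ Irr Γ w' :=
  not_congr (redu_se h)

/-- The key extraction lemma: a reducible extension of an irreducible word
can be rewritten to expose the inverse letter at the front. -/
lemma alpha {w : Word V} {a : Letter V} (hw : Irr Γ w) (h : Redu Γ (a :: w)) :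
    ∃ t, SE Γ w (linv a :: t) ∧ Irr Γ t := by
  obtain ⟨x, y, z, c, hdec, hy⟩ := h
  cases x with
  | nil =>
      injection hdec with h1 h2
      subst h1
      refine ⟨y ++ z, ?_, ?_⟩
      · rw [h2]
        exact pull_front (by simpa [linv] using hy) z
      · intro hred
        refine hw (by rw [h2]; exact redu_insert (e := linv a) rfl y z hred (fun b hb => hy b hb))
  | cons d x' =>
      exfalso
      injection hdec with h1 h2
      exact hw ⟨x', y, z, c, h2, hy⟩

lemma redu_of_se_cons {w t : Word V} {a : Letter V} (h : SE Γ w (linv a :: t)) :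
    Redu Γ (a :: w) := by
  have h1 : SE Γ (a :: w) (a :: linv a :: t) := h.cons a
  rw [redu_se h1]
  exact ⟨[], [], t, a, by simp, by simp⟩
/-! ### The space of irreducible words up to swap equivalence -/

variable (Γ) in
def XSp := Quot (fun w w' : {w : Word V // Irr Γ w} => Sw Γ w.1 w'.1)

def iX (w : Word V) (h : Irr Γ w) : XSp Γ := Quot.mk _ ⟨w, h⟩

lemma iX_eq_of_se {w w' : Word V} (h : SE Γ w w') :
    ∀ (hw : Irr Γ w) (hw' : Irr Γ w'), iX w hw = iX w' hw' := by
  induction h with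
  | rel a b hab => exact fun hw hw' => Quot.sound hab
  | refl a => exact fun hw hw' => rfl
  | symm a b hab ih => exact fun hw hw' => (ih hw' hw).symm
  | trans a b c hab hbc ih₁ ih₂ =>
      intro hw hw'
      have hb : Irr Γ b := (irr_se hab).1 hw
      exact (ih₁ hw hb).trans (ih₂ hb hw')

lemma se_of_iX_eq {w w' : Word V} {hw : Irr Γ w} {hw' : Irr Γ w'}
    (h : iX w hw = iX w' hw') : SE Γ w w' := by
  have := Quot.eqvGen_exact h
  have aux : ∀ (a b : {w : Word V // Irr Γ w}),
      Relation.EqvGen (fun w w' : {w : Word V // Irr Γ w} => Sw Γ w.1 w'.1) a b →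
      SE Γ a.1 b.1 := by
    intro a b hab
    induction hab with
    | rel a b hab => exact SE.of_sw hab
    | refl a => exact SE.refl _
    | symm a b _ ih => exact ih.symm
    | trans a b c _ _ ih₁ ih₂ => exact ih₁.trans ih₂
  exact aux _ _ this

/-! ### The letter action -/

noncomputable def fAux (a : Letter V) (w : {w : Word V // Irr Γ w}) : XSp Γ :=
  if h : Redu Γ (a :: w.1) then
    iX (alpha w.2 h).choose (alpha w.2 h).choose_spec.2
  else iX (a :: w.1) h

lemma fAux_red {a : Letter V} {w : {w : Word V // Irr Γ w}} (h : Redu Γ (a :: w.1))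
    {t : Word V} (ht : SE Γ w.1 (linv a :: t)) (hit : Irr Γ t) :
    fAux a w = iX t hit := by
  rw [fAux, dif_pos h]
  have h1 : SE Γ (linv a :: (alpha w.2 h).choose) (linv a :: t) :=
    ((alpha w.2 h).choose_spec.1.symm).trans ht
  exact iX_eq_of_se (se_cancel h1) _ _

lemma fAux_nred {a : Letter V} {w : {w : Word V // Irr Γ w}} (h : ¬Redu Γ (a :: w.1)) :
    fAux a w = iX (a :: w.1) h := by
  rw [fAux, dif_neg h]

lemma fAux_se {a : Letter V} {w w' : {w : Word V // Irr Γ w}} (h : SE Γ w.1 w'.1) :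
    fAux a w = fAux a w' := by
  by_cases hr : Redu Γ (a :: w.1)
  · have hr' : Redu Γ (a :: w'.1) := (redu_se (h.cons a)).1 hr
    obtain ⟨t', ht', hit'⟩ := alpha w'.2 hr'
    rw [fAux_red hr' ht' hit', fAux_red hr (h.trans ht') hit']
  · have hr' : ¬Redu Γ (a :: w'.1) := fun hx => hr ((redu_se (h.cons a)).2 hx)
    rw [fAux_nred hr, fAux_nred hr']
    exact iX_eq_of_se (h.cons a) _ _

noncomputable def fAct (a : Letter V) : XSp Γ → XSp Γ :=
  Quot.lift (fAux a) (fun _ _ hr => fAux_se (SE.of_sw hr))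

lemma fAct_iX (a : Letter V) (w : Word V) (h : Irr Γ w) :
    fAct a (iX w h) = fAux a ⟨w, h⟩ := rfl

lemma fAct_red {a : Letter V} {w : Word V} (hw : Irr Γ w) (h : Redu Γ (a :: w))
    {t : Word V} (ht : SE Γ w (linv a :: t)) (hit : Irr Γ t) :
    fAct a (iX w hw) = iX t hit := fAux_red h ht hit

lemma fAct_nred {a : Letter V} {w : Word V} (hw : Irr Γ w) (h : ¬Redu Γ (a :: w)) :
    fAct a (iX w hw) = iX (a :: w) h := fAux_nred h

lemma fAct_inv (a : Letter V) (ξ : XSp Γ) : fAct (linv a) (fAct a ξ) = ξ := by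
  induction ξ using Quot.ind with
  | mk w =>
      obtain ⟨w, hw⟩ := w
      show fAct (linv a) (fAct a (iX w hw)) = iX w hw
      by_cases h : Redu Γ (a :: w)
      · obtain ⟨t, ht, hit⟩ := alpha hw h
        rw [fAct_red hw h ht hit]
        have hnr : ¬Redu Γ (linv a :: t) := fun hx => hw ((redu_se ht).2 hx)
        rw [fAct_nred hit hnr]
        exact iX_eq_of_se ht.symm _ _
      · rw [fAct_nred hw h]
        have hr : Redu Γ (linv a :: a :: w) :=
          ⟨[], [], w, linv a, by simp, by simp⟩
        have hse : SE Γ (a :: w) (linv (linv a) :: w) := by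
          rw [linv_linv]; exact SE.refl _
        exact fAct_red h hr hse hw

lemma fAct_comm_auxB {p q : Letter V} (hpq : Γ.Adj p.1 q.1) {w : Word V} (hw : Irr Γ w)
    (hq : Redu Γ (q :: w)) (hp : ¬Redu Γ (p :: w)) :
    fAct p (fAct q (iX w hw)) = fAct q (fAct p (iX w hw)) := by
  obtain ⟨t, ht, hit⟩ := alpha hw hq
  have hnpt : ¬Redu Γ (p :: t) := by
    intro hx
    obtain ⟨s, hs, his⟩ := alpha hit hx
    have h1 : SE Γ w (linv q :: linv p :: s) := ht.trans (hs.cons _)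
    have h2 : Sw Γ ([] ++ linv q :: linv p :: s) ([] ++ linv p :: linv q :: s) :=
      Sw.mk [] s (linv q) (linv p) (by simpa using hpq.symm)
    exact hp (redu_of_se_cons (h1.trans (by simpa using SE.of_sw h2)))
  have hse : SE Γ (p :: w) (linv q :: p :: t) := by
    have h1 : SE Γ (p :: w) (p :: linv q :: t) := ht.cons p
    have h2 : Sw Γ ([] ++ p :: linv q :: t) ([] ++ linv q :: p :: t) :=
      Sw.mk [] t p (linv q) (by simpa using hpq)
    exact h1.trans (by simpa using SE.of_sw h2)
  rw [fAct_red hw hq ht hit, fAct_nred hit hnpt, fAct_nred hw hp,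
    fAct_red hp (redu_of_se_cons hse) hse hnpt]

lemma fAct_comm {p q : Letter V} (hpq : Γ.Adj p.1 q.1) (ξ : XSp Γ) :
    fAct p (fAct q ξ) = fAct q (fAct p ξ) := by
  induction ξ using Quot.ind with
  | mk w =>
      obtain ⟨w, hw⟩ := w
      show fAct p (fAct q (iX w hw)) = fAct q (fAct p (iX w hw))
      by_cases hq : Redu Γ (q :: w) <;> by_cases hp : Redu Γ (p :: w)
      · -- both reducible
        obtain ⟨t, ht, hit⟩ := alpha hw hq
        obtain ⟨s, hs, his⟩ := alpha hw hp
        have hne : linv q ≠ linv p := by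
          intro hx
          have := congrArg Prod.fst hx
          simp only [linv_fst] at this
          exact hpq.ne' this
        obtain ⟨-, u, hu1, hu2⟩ := head_exchange hne (ht.symm.trans hs)
        have hiu : Irr Γ u := irr_tail ((irr_se hu1).1 hit)
        rw [fAct_red hw hq ht hit, fAct_red hw hp hs his,
          fAct_red hit (redu_of_se_cons hu1) hu1 hiu,
          fAct_red his (redu_of_se_cons hu2) hu2 hiu]
      · exact fAct_comm_auxB hpq hw hq hp
      · exact (fAct_comm_auxB hpq.symm hw hp hq).symm
      · -- both irreducible extensions
        have hq' : ¬Redu Γ (p :: q :: w) := by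
          intro hx
          obtain ⟨t, ht, -⟩ := alpha hq hx
          have hne : q ≠ linv p := by
            intro hxx
            have := congrArg Prod.fst hxx
            simp only [linv_fst] at this
            exact hpq.ne' this
          obtain ⟨-, s', hs1, -⟩ := head_exchange hne ht
          exact hp (redu_of_se_cons hs1)
        have hp' : ¬Redu Γ (q :: p :: w) := by
          intro hx
          obtain ⟨t, ht, -⟩ := alpha hp hx
          have hne : p ≠ linv q := by
            intro hxx
            have := congrArg Prod.fst hxx
            simp only [linv_fst] at this
            exact hpq.ne this
          obtain ⟨-, s', hs1, -⟩ := head_exchange hne ht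
          exact hq (redu_of_se_cons hs1)
        rw [fAct_nred hw hq, fAct_nred hq hq', fAct_nred hw hp, fAct_nred hp hp']
        have hsw : Sw Γ ([] ++ p :: q :: w) ([] ++ q :: p :: w) := Sw.mk [] w p q hpq
        exact iX_eq_of_se (by simpa using SE.of_sw hsw) _ _

/-! ### The action of words and the normal form theorem -/

noncomputable def act : Word V → XSp Γ → XSp Γ
  | [], ξ => ξ
  | a :: w, ξ => fAct a (act w ξ)

lemma act_cons (a : Letter V) (w : Word V) (ξ : XSp Γ) :
    act (a :: w) ξ = fAct a (act w ξ) := rfl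

lemma act_append (x y : Word V) (ξ : XSp Γ) : act (x ++ y) ξ = act x (act y ξ) := by
  induction x with
  | nil => rfl
  | cons a x ih => rw [List.cons_append, act_cons, act_cons, ih]

lemma act_stp {w w' : Word V} (h : Stp Γ w w') (ξ : XSp Γ) : act w ξ = act w' ξ := by
  rcases h with h | h
  · cases h with
    | mk x y p q hpq =>
        rw [act_append, act_append, act_cons, act_cons, act_cons, act_cons,
          fAct_comm hpq]
  · cases h with
    | mk x y a =>
        rw [act_append, act_append, act_cons, act_cons]
        have h0 := fAct_inv (linv a) (act y ξ)
        rw [linv_linv] at h0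
        rw [h0]

lemma act_we {w w' : Word V} (h : WE Γ w w') (ξ : XSp Γ) : act w ξ = act w' ξ := by
  induction h with
  | rel a b hab => exact act_stp hab ξ
  | refl a => rfl
  | symm a b _ ih => exact ih.symm
  | trans a b c _ _ ih₁ ih₂ => exact ih₁.trans ih₂

noncomputable def theta (w : Word V) : XSp Γ := act w (iX [] irr_nil)

lemma theta_irr {w : Word V} (h : Irr Γ w) : theta (Γ := Γ) w = iX w h := by
  induction w with
  | nil => rfl
  | cons a w ih =>
      have hw : Irr Γ w := irr_tail h
      show fAct a (theta w) = _
      rw [ih hw, fAct_nred hw h]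

/-- The normal form theorem: equivalent irreducible words are swap-equivalent. -/
theorem we_irr_se {w w' : Word V} (h : WE Γ w w') (hw : Irr Γ w) (hw' : Irr Γ w') :
    SE Γ w w' := by
  have := act_we h (iX ([] : Word V) irr_nil)
  rw [show act w (iX ([] : Word V) irr_nil) = theta w from rfl,
    show act w' (iX ([] : Word V) irr_nil) = theta w' from rfl,
    theta_irr hw, theta_irr hw'] at this
  exact se_of_iX_eq this

/-! ### Reduction to irreducible words -/

lemma WE.refl (w : Word V) : WE Γ w w := Relation.EqvGen.refl w
lemma WE.symm {w w' : Word V} (h : WE Γ w w') : WE Γ w' w := Relation.EqvGen.symm _ _ h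
lemma WE.trans {w₁ w₂ w₃ : Word V} (h : WE Γ w₁ w₂) (h' : WE Γ w₂ w₃) : WE Γ w₁ w₃ :=
  Relation.EqvGen.trans _ _ _ h h'
lemma WE.of_se {w w' : Word V} (h : SE Γ w w') : WE Γ w w' :=
  Relation.EqvGen.mono (fun _ _ h => Or.inl h) w w' h
lemma WE.of_dl {w w' : Word V} (h : Dl w w') : WE Γ w w' :=
  Relation.EqvGen.rel _ _ (Or.inr h)

lemma redu_shorter {w : Word V} (h : Redu Γ w) :
    ∃ w', WE Γ w w' ∧ w'.length + 2 = w.length := by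
  obtain ⟨x, y, z, c, rfl, hy⟩ := h
  have h1 : SE Γ (y ++ c :: (linv c :: z)) (c :: (y ++ (linv c :: z))) :=
    pull_front hy (linv c :: z)
  have h2 : SE Γ (x ++ c :: y ++ linv c :: z) ((x ++ y) ++ c :: linv c :: z) := by
    have h3 := (h1.symm).append_left x
    have e1 : x ++ c :: y ++ linv c :: z = x ++ (c :: (y ++ (linv c :: z))) := by simp
    have e2 : (x ++ y) ++ c :: linv c :: z = x ++ (y ++ c :: (linv c :: z)) := by simp
    rw [e1, e2]
    exact h3
  have h3 : Dl ((x ++ y) ++ c :: linv c :: z) ((x ++ y) ++ z) := Dl.mk (x ++ y) z c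
  refine ⟨(x ++ y) ++ z, (WE.of_se h2).trans (WE.of_dl h3), ?_⟩
  simp only [List.length_append, List.length_cons]
  omega

lemma exists_irr_reduct_aux : ∀ (n : ℕ) (w : Word V), w.length ≤ n →
    ∃ w₀, WE Γ w w₀ ∧ Irr Γ w₀ ∧ w₀.length ≤ w.length := by
  intro n
  induction n with
  | zero =>
      intro w hw
      have hnil : w = [] := List.eq_nil_of_length_eq_zero (by omega)
      subst hnil
      exact ⟨[], WE.refl _, irr_nil, le_refl _⟩
  | succ n ih =>
      intro w hw
      by_cases h : Redu Γ w
      · obtain ⟨w', hwe, hlen⟩ := redu_shorter h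
        obtain ⟨w₀, h1, h2, h3⟩ := ih w' (by omega)
        exact ⟨w₀, hwe.trans h1, h2, by omega⟩
      · exact ⟨w, WE.refl w, h, le_refl _⟩

lemma exists_irr_reduct (w : Word V) :
    ∃ w₀, WE Γ w w₀ ∧ Irr Γ w₀ ∧ w₀.length ≤ w.length :=
  exists_irr_reduct_aux w.length w (le_refl _)
/-! ### The group of words -/

/-- Inverse of a word. -/
def invw (w : Word V) : Word V := (w.map linv).reverse

@[simp] lemma invw_nil : invw ([] : Word V) = [] := rfl

lemma invw_cons (a : Letter V) (w : Word V) : invw (a :: w) = invw w ++ [linv a] := by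
  simp [invw]

lemma invw_append (w₁ w₂ : Word V) : invw (w₁ ++ w₂) = invw w₂ ++ invw w₁ := by
  simp [invw]

@[simp] lemma invw_invw (w : Word V) : invw (invw w) = w := by
  simp [invw, List.map_reverse, List.map_map]
  have : (linv ∘ linv : Letter V → Letter V) = id := funext linv_linv
  rw [this, List.map_id]

@[simp] lemma invw_length (w : Word V) : (invw w).length = w.length := by simp [invw]

variable (Γ) in
/-- The image of one letter in the RAAG. -/
def gsingle (a : Letter V) : RAAG Γ := cond a.2 (raagGen Γ a.1) (raagGen Γ a.1)⁻¹

variable (Γ) in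
/-- The image of a word in the RAAG. -/
def wp (w : Word V) : RAAG Γ := (w.map (gsingle Γ)).prod

@[simp] lemma wp_nil : wp Γ ([] : Word V) = 1 := rfl

lemma wp_cons (a : Letter V) (w : Word V) : wp Γ (a :: w) = gsingle Γ a * wp Γ w := by
  simp [wp]

lemma wp_append (w₁ w₂ : Word V) : wp Γ (w₁ ++ w₂) = wp Γ w₁ * wp Γ w₂ := by
  simp [wp]

lemma wp_single (a : Letter V) : wp Γ [a] = gsingle Γ a := by simp [wp]

lemma gsingle_linv (a : Letter V) : gsingle Γ (linv a) = (gsingle Γ a)⁻¹ := by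
  cases a with
  | mk v b => cases b <;> simp [gsingle, linv]

lemma wp_invw (w : Word V) : wp Γ (invw w) = (wp Γ w)⁻¹ := by
  induction w with
  | nil => simp
  | cons a w ih =>
      rw [invw_cons, wp_append, ih, wp_single, gsingle_linv, wp_cons, mul_inv_rev]

lemma gen_comm {u v : V} (h : Γ.Adj u v) : Commute (raagGen Γ u) (raagGen Γ v) := by
  have hmem : (FreeGroup.of u * FreeGroup.of v * (FreeGroup.of u)⁻¹ * (FreeGroup.of v)⁻¹ :
      FreeGroup V) ∈ raagRels Γ := ⟨u, v, h, rfl⟩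
  have h1 : (PresentedGroup.mk (raagRels Γ))
      (FreeGroup.of u * FreeGroup.of v * (FreeGroup.of u)⁻¹ * (FreeGroup.of v)⁻¹) = 1 := by
    rw [PresentedGroup.mk_eq_one_iff]
    exact Subgroup.subset_normalClosure hmem
  rw [← commutatorElement_eq_one_iff_commute]
  rw [map_mul, map_mul, map_inv, map_inv] at h1
  exact h1

lemma gsingle_comm {a b : Letter V} (h : Γ.Adj a.1 b.1) :
    Commute (gsingle Γ a) (gsingle Γ b) := by
  have hc : Commute (raagGen Γ a.1) (raagGen Γ b.1) := gen_comm h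
  cases ha : a.2 <;> cases hb : b.2 <;> simpa [gsingle, ha, hb] using hc

lemma wp_stp {w w' : Word V} (h : Stp Γ w w') : wp Γ w = wp Γ w' := by
  rcases h with h | h
  · cases h with
    | mk x y p q hpq =>
        rw [wp_append, wp_append, wp_cons, wp_cons, wp_cons, wp_cons,
          ← mul_assoc (gsingle Γ p), (gsingle_comm hpq).eq, mul_assoc]
  · cases h with
    | mk x y a =>
        rw [wp_append, wp_append, wp_cons, wp_cons, gsingle_linv,
          ← mul_assoc (gsingle Γ a), mul_inv_cancel, one_mul]

lemma wp_we {w w' : Word V} (h : WE Γ w w') : wp Γ w = wp Γ w' := by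
  induction h with
  | rel a b hab => exact wp_stp hab
  | refl a => rfl
  | symm a b _ ih => exact ih.symm
  | trans a b c _ _ ih₁ ih₂ => exact ih₁.trans ih₂

/-! ### The quotient group of words -/

lemma Dl.append_left {w w' : Word V} (u : Word V) (h : Dl w w') : Dl (u ++ w) (u ++ w') := by
  cases h with
  | mk x y a =>
      have := Dl.mk (u ++ x) y a
      simpa using this

lemma Dl.append_right {w w' : Word V} (u : Word V) (h : Dl w w') : Dl (w ++ u) (w' ++ u) := by
  cases h with
  | mk x y a =>
      have := Dl.mk x (y ++ u) a
      simpa using this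

lemma stp_append_left {w w' : Word V} (u : Word V) (h : Stp Γ w w') :
    Stp Γ (u ++ w) (u ++ w') := by
  rcases h with h | h
  · exact Or.inl (h.append_left u)
  · exact Or.inr (h.append_left u)

lemma stp_append_right {w w' : Word V} (u : Word V) (h : Stp Γ w w') :
    Stp Γ (w ++ u) (w' ++ u) := by
  rcases h with h | h
  · exact Or.inl (h.append_right u)
  · exact Or.inr (h.append_right u)

lemma stp_invw {w w' : Word V} (h : Stp Γ w w') : Stp Γ (invw w) (invw w') := by
  rcases h with h | h
  · cases h with
    | mk x y p q hpq =>
        left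
        rw [invw_append, invw_append, invw_cons, invw_cons, invw_cons, invw_cons]
        have := Sw.mk (Γ := Γ) (invw y) (invw x) (linv q) (linv p) (by simpa using hpq.symm)
        simpa using this
  · cases h with
    | mk x y a =>
        right
        have h0 := Dl.mk (invw y) (invw x) a
        have e1 : invw (x ++ a :: linv a :: y) = invw y ++ a :: linv a :: invw x := by
          simp [invw_append, invw_cons]
        have e2 : invw (x ++ y) = invw y ++ invw x := invw_append x y
        rw [e1, e2]
        exact h0

lemma quot_eq_of_we {w w' : Word V} (h : WE Γ w w') :
    Quot.mk (Stp Γ) w = Quot.mk (Stp Γ) w' := Quot.eqvGen_sound h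

lemma we_invw_append (w : Word V) : WE Γ (invw w ++ w) [] := by
  induction w with
  | nil => exact WE.refl _
  | cons a t ih =>
      have h1 : Dl (invw t ++ linv a :: linv (linv a) :: t) (invw t ++ t) :=
        Dl.mk (invw t) t (linv a)
      rw [linv_linv] at h1
      have h2 : invw (a :: t) ++ a :: t = invw t ++ linv a :: a :: t := by
        rw [invw_cons]; simp
      rw [h2]
      exact WE.trans (Relation.EqvGen.rel _ _ (Or.inr h1)) ih

variable (Γ) in
abbrev QW := Quot (Stp Γ)

noncomputable instance : Group (QW Γ) where
  mul := Quot.map₂ (· ++ ·)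
    (fun a _ _ h => stp_append_left a h)
    (fun _ _ b h => stp_append_right b h)
  one := Quot.mk _ []
  inv := Quot.map invw (fun _ _ h => stp_invw h)
  mul_assoc := by
    intro a b c
    induction a using Quot.ind with | mk a =>
    induction b using Quot.ind with | mk b =>
    induction c using Quot.ind with | mk c =>
    show Quot.mk _ ((a ++ b) ++ c) = Quot.mk _ (a ++ (b ++ c))
    rw [List.append_assoc]
  one_mul := by
    intro a
    induction a using Quot.ind with | mk a =>
    show Quot.mk _ ([] ++ a) = Quot.mk _ a
    rw [List.nil_append]
  mul_one := by
    intro a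
    induction a using Quot.ind with | mk a =>
    show Quot.mk _ (a ++ []) = Quot.mk _ a
    rw [List.append_nil]
  inv_mul_cancel := by
    intro a
    induction a using Quot.ind with | mk a =>
    show Quot.mk _ (invw a ++ a) = Quot.mk _ []
    exact quot_eq_of_we (we_invw_append a)

lemma qw_mul_mk (w w' : Word V) :
    (Quot.mk (Stp Γ) w) * (Quot.mk (Stp Γ) w') = Quot.mk (Stp Γ) (w ++ w') := rfl

lemma qw_inv_mk (w : Word V) : (Quot.mk (Stp Γ) w)⁻¹ = Quot.mk (Stp Γ) (invw w) := rfl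

lemma qw_one : (1 : QW Γ) = Quot.mk (Stp Γ) [] := rfl

variable (Γ) in
noncomputable def phi : RAAG Γ →* QW Γ :=
  PresentedGroup.toGroup (f := fun v => Quot.mk (Stp Γ) [(v, true)]) (by
    rintro r ⟨u, v, huv, rfl⟩
    rw [map_mul, map_mul, map_mul, map_inv, map_inv, FreeGroup.lift_apply_of, FreeGroup.lift_apply_of]
    rw [qw_inv_mk, qw_inv_mk]
    show Quot.mk (Stp Γ) ([(u, true)] ++ [(v, true)] ++ [(u, false)] ++ [(v, false)]) = 1
    have h1 : Sw Γ ([(u, true)] ++ (v, true) :: (u, false) :: [(v, false)])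
        ([(u, true)] ++ (u, false) :: (v, true) :: [(v, false)]) :=
      Sw.mk [(u, true)] [(v, false)] (v, true) (u, false) huv.symm
    have h2 : Dl ([] ++ (u, true) :: (u, false) :: [(v, true), (v, false)])
        ([] ++ [(v, true), (v, false)]) := Dl.mk [] [(v, true), (v, false)] (u, true)
    have h3 : Dl ([] ++ (v, true) :: (v, false) :: []) ([] ++ []) :=
      Dl.mk [] [] (v, true)
    have hwe : WE Γ ([(u, true)] ++ [(v, true)] ++ [(u, false)] ++ [(v, false)]) [] := by
      refine WE.trans (Relation.EqvGen.rel _ _ (Or.inl (by simpa using h1))) ?_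
      refine WE.trans (Relation.EqvGen.rel _ _ (Or.inr (by simpa using h2))) ?_
      exact Relation.EqvGen.rel _ _ (Or.inr (by simpa using h3))
    rw [qw_one]
    exact quot_eq_of_we hwe)

lemma phi_gen (v : V) : phi Γ (raagGen Γ v) = Quot.mk (Stp Γ) [(v, true)] :=
  PresentedGroup.toGroup.of _

lemma phi_wp (w : Word V) : phi Γ (wp Γ w) = Quot.mk (Stp Γ) w := by
  induction w with
  | nil => simp [qw_one]
  | cons a w ih =>
      rw [wp_cons, map_mul, ih]
      have ha : phi Γ (gsingle Γ a) = Quot.mk (Stp Γ) [a] := by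
        cases a with
        | mk v b =>
            cases b
            · show phi Γ (raagGen Γ v)⁻¹ = _
              rw [map_inv, phi_gen, qw_inv_mk]
              rfl
            · exact phi_gen v
      rw [ha, qw_mul_mk]
      rfl

/-- Completeness: words with the same image in the RAAG are equivalent. -/
lemma we_of_wp_eq {w w' : Word V} (h : wp Γ w = wp Γ w') : WE Γ w w' := by
  have := congrArg (phi Γ) h
  rw [phi_wp, phi_wp] at this
  exact Quot.eqvGen_exact this

/-- Surjectivity of `wp`. -/
lemma wp_surjective : Function.Surjective (wp Γ) := by
  intro g
  have hg : g ∈ Subgroup.closure (Set.range (PresentedGroup.of :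
      V → PresentedGroup (raagRels Γ))) := by
    rw [PresentedGroup.closure_range_of]
    trivial
  refine Subgroup.closure_induction ?_ ?_ ?_ ?_ hg
  · rintro x ⟨v, rfl⟩
    exact ⟨[(v, true)], by simp [wp, gsingle]; rfl⟩
  · exact ⟨[], rfl⟩
  · rintro x y - - ⟨w₁, rfl⟩ ⟨w₂, rfl⟩
    exact ⟨w₁ ++ w₂, wp_append w₁ w₂⟩
  · rintro x - ⟨w, rfl⟩
    exact ⟨invw w, wp_invw w⟩
/-! ### The length function -/

variable (Γ) in
/-- Word length of a group element. -/
noncomputable def len (g : RAAG Γ) : ℕ :=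
  sInf {n | ∃ w : Word V, wp Γ w = g ∧ w.length = n}

lemma len_set_nonempty (g : RAAG Γ) :
    {n | ∃ w : Word V, wp Γ w = g ∧ w.length = n}.Nonempty := by
  obtain ⟨w, hw⟩ := wp_surjective g
  exact ⟨w.length, w, hw, rfl⟩

lemma len_le (w : Word V) : len Γ (wp Γ w) ≤ w.length :=
  Nat.sInf_le ⟨w, rfl, rfl⟩

lemma exists_word_len (g : RAAG Γ) : ∃ w : Word V, wp Γ w = g ∧ w.length = len Γ g :=
  Nat.sInf_mem (len_set_nonempty g)

lemma irr_of_minimal {w : Word V} (hmin : w.length = len Γ (wp Γ w)) : Irr Γ w := by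
  intro hred
  obtain ⟨w', hwe, hlen⟩ := redu_shorter hred
  have h1 : wp Γ w' = wp Γ w := (wp_we hwe).symm
  have h2 : len Γ (wp Γ w) ≤ w'.length := h1 ▸ len_le w'
  omega

lemma exists_geodesic (g : RAAG Γ) :
    ∃ w : Word V, wp Γ w = g ∧ w.length = len Γ g ∧ Irr Γ w := by
  obtain ⟨w, hw, hl⟩ := exists_word_len g
  exact ⟨w, hw, hl, irr_of_minimal (by rw [hw, hl])⟩

/-- Key: every irreducible word is a geodesic. -/
lemma irr_length {w : Word V} (h : Irr Γ w) : w.length = len Γ (wp Γ w) := by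
  obtain ⟨w₀, hw₀, hl₀, hirr₀⟩ := exists_geodesic (wp Γ w)
  have hwe : WE Γ w w₀ := we_of_wp_eq (by rw [hw₀])
  have hse : SE Γ w w₀ := we_irr_se hwe h hirr₀
  rw [hse.length_eq, hl₀]

@[simp] lemma len_one : len Γ (1 : RAAG Γ) = 0 := by
  have := irr_length (Γ := Γ) irr_nil
  simpa using this.symm

lemma len_eq_zero_iff {g : RAAG Γ} : len Γ g = 0 ↔ g = 1 := by
  constructor
  · intro h
    obtain ⟨w, hw, hl, -⟩ := exists_geodesic g
    rw [h] at hl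
    rw [← hw, List.length_eq_zero_iff.1 hl, wp_nil]
  · rintro rfl; exact len_one

lemma len_mul_le (g h : RAAG Γ) : len Γ (g * h) ≤ len Γ g + len Γ h := by
  obtain ⟨w₁, hw₁, hl₁⟩ := exists_word_len g
  obtain ⟨w₂, hw₂, hl₂⟩ := exists_word_len h
  have h3 := len_le (Γ := Γ) (w₁ ++ w₂)
  rw [wp_append, hw₁, hw₂] at h3
  have h4 : (w₁ ++ w₂).length = w₁.length + w₂.length := List.length_append
  omega

lemma len_inv (g : RAAG Γ) : len Γ g⁻¹ = len Γ g := by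
  have h1 : ∀ g : RAAG Γ, len Γ g⁻¹ ≤ len Γ g := by
    intro g
    obtain ⟨w, hw, hl⟩ := exists_word_len g
    have h3 := len_le (Γ := Γ) (invw w)
    rw [wp_invw, hw] at h3
    rwa [invw_length, hl] at h3
  have h2 := h1 g⁻¹
  rw [inv_inv] at h2
  exact le_antisymm (h1 g) h2

lemma len_gsingle_le (a : Letter V) : len Γ (gsingle Γ a) ≤ 1 := by
  have := len_le (Γ := Γ) [a]
  rwa [wp_single] at this

lemma gsingle_ne_one (a : Letter V) : gsingle Γ a ≠ 1 := by
  intro h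
  have h1 := irr_length (irr_single (Γ := Γ) a)
  rw [wp_single, h] at h1
  simp at h1

lemma len_gsingle (a : Letter V) : len Γ (gsingle Γ a) = 1 := by
  have h1 := len_gsingle_le (Γ := Γ) a
  have h2 : len Γ (gsingle Γ a) ≠ 0 := fun h => gsingle_ne_one a (len_eq_zero_iff.1 h)
  omega

lemma len_eq_one_iff {g : RAAG Γ} :
    len Γ g = 1 ↔ ∃ u : V, g = raagGen Γ u ∨ g = (raagGen Γ u)⁻¹ := by
  constructor
  · intro h
    obtain ⟨w, hw, hl, -⟩ := exists_geodesic g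
    rw [h] at hl
    obtain ⟨a, rfl⟩ := List.length_eq_one_iff.1 hl
    refine ⟨a.1, ?_⟩
    rw [← hw, wp_single]
    cases ha : a.2
    · right; simp [gsingle, ha]
    · left; simp [gsingle, ha]
  · rintro ⟨u, rfl | rfl⟩
    · have : raagGen Γ u = gsingle Γ (u, true) := by simp [gsingle]
      rw [this, len_gsingle]
    · have : (raagGen Γ u)⁻¹ = gsingle Γ (u, false) := by simp [gsingle]
      rw [this, len_gsingle]

/-! ### Distance in the Cayley graph -/

lemma cayley_adj_iff {x y : RAAG Γ} :
    (cayleyM Γ).Adj x y ↔ len Γ (x⁻¹ * y) = 1 := by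
  constructor
  · rintro ⟨hne, u, h | h⟩
    · rw [h, len_eq_one_iff]; exact ⟨u, Or.inl rfl⟩
    · rw [h, len_inv, len_eq_one_iff]; exact ⟨u, Or.inl rfl⟩
  · intro h
    have hne : x ≠ y := by
      intro h'
      subst h'
      simp at h
    obtain ⟨u, hu⟩ := len_eq_one_iff.1 h
    exact ⟨hne, u, hu⟩

lemma exists_walk_of_word (w : Word V) :
    ∀ x : RAAG Γ, ∃ p : (cayleyM Γ).Walk x (x * wp Γ w), p.length = w.length := by
  induction w with
  | nil =>
      intro x
      refine ⟨(SimpleGraph.Walk.nil' x).copy rfl (by simp), ?_⟩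
      rw [SimpleGraph.Walk.length_copy]; rfl
  | cons a t ih =>
      intro x
      by_cases hxy : x = x * gsingle Γ a
      · exfalso
        have h0 : x * gsingle Γ a = x * 1 := by rw [mul_one, ← hxy]
        exact gsingle_ne_one a (mul_left_cancel h0)
      · have hadj : (cayleyM Γ).Adj x (x * gsingle Γ a) := by
          rw [cayley_adj_iff]
          simp [len_gsingle]
        obtain ⟨p, hp⟩ := ih (x * gsingle Γ a)
        refine ⟨(SimpleGraph.Walk.cons hadj p).copy rfl (by rw [wp_cons, mul_assoc]), ?_⟩
        simp [hp]

lemma len_le_walk {x y : RAAG Γ} (p : (cayleyM Γ).Walk x y) :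
    len Γ (x⁻¹ * y) ≤ p.length := by
  induction p with
  | nil => simp
  | @cons x' z y' h p ih =>
      have h1 : len Γ (x'⁻¹ * z) = 1 := cayley_adj_iff.1 h
      have h2 : x'⁻¹ * y' = (x'⁻¹ * z) * (z⁻¹ * y') := by group
      calc len Γ (x'⁻¹ * y') ≤ len Γ (x'⁻¹ * z) + len Γ (z⁻¹ * y') := by
            rw [h2]; exact len_mul_le _ _
      _ ≤ 1 + p.length := by omega
      _ = (SimpleGraph.Walk.cons h p).length := by simp [Nat.add_comm]

lemma dist_eq_len (x y : RAAG Γ) : (cayleyM Γ).dist x y = len Γ (x⁻¹ * y) := by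
  obtain ⟨w, hw, hl, -⟩ := exists_geodesic (x⁻¹ * y)
  obtain ⟨p, hp⟩ := exists_walk_of_word w x
  have hxy : x * wp Γ w = y := by rw [hw, mul_inv_cancel_left]
  have hle : (cayleyM Γ).dist x y ≤ len Γ (x⁻¹ * y) := by
    have h5 := SimpleGraph.dist_le (p.copy rfl hxy)
    rw [SimpleGraph.Walk.length_copy, hp, hl] at h5
    exact h5
  have hre : (cayleyM Γ).Reachable x y := ⟨p.copy rfl hxy⟩
  obtain ⟨p₀, hp₀⟩ := hre.exists_walk_length_eq_dist
  have hge := len_le_walk p₀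
  omega
/-! ### Initial letters -/

variable (Γ) in
/-- The set of initial letters of a group element. -/
def InitL (g : RAAG Γ) : Set (Letter V) :=
  {a | len Γ ((gsingle Γ a)⁻¹ * g) < len Γ g}

lemma mem_init_iff {g : RAAG Γ} {a : Letter V} :
    a ∈ InitL Γ g ↔ len Γ ((gsingle Γ a)⁻¹ * g) + 1 = len Γ g := by
  have h1 : len Γ g ≤ 1 + len Γ ((gsingle Γ a)⁻¹ * g) := by
    have h2 := len_mul_le (gsingle Γ a) ((gsingle Γ a)⁻¹ * g)
    rw [mul_inv_cancel_left] at h2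
    have h3 := len_gsingle (Γ := Γ) a
    omega
  constructor
  · intro h
    have h0 : len Γ ((gsingle Γ a)⁻¹ * g) < len Γ g := h
    omega
  · intro h
    show len Γ ((gsingle Γ a)⁻¹ * g) < len Γ g
    omega

variable (Γ) in
/-- A letter can be pulled to the front of a word. -/
def PullL (a : Letter V) (w : Word V) : Prop :=
  ∃ y z, w = y ++ a :: z ∧ ∀ b ∈ y, Γ.Adj b.1 a.1

lemma comm_of_all_adj {u : Word V} {a : Letter V} (h : ∀ b ∈ u, Γ.Adj b.1 a.1) :
    Commute (gsingle Γ a) (wp Γ u) := by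
  induction u with
  | nil => simp [Commute.one_right]
  | cons c u ih =>
      rw [wp_cons]
      exact (gsingle_comm (h c (List.mem_cons_self)).symm).mul_right
        (ih (fun b hb => h b (List.mem_cons_of_mem _ hb)))

lemma wp_of_pull {a : Letter V} {w y z : Word V} (hd : w = y ++ a :: z)
    (hy : ∀ b ∈ y, Γ.Adj b.1 a.1) :
    wp Γ w = gsingle Γ a * wp Γ (y ++ z) := by
  subst hd
  rw [wp_append, wp_cons, wp_append, ← mul_assoc, ← mul_assoc,
    (comm_of_all_adj hy).eq]

lemma init_of_pull {w : Word V} {a : Letter V} (hw : Irr Γ w) (h : PullL Γ a w) :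
    a ∈ InitL Γ (wp Γ w) := by
  obtain ⟨y, z, hd, hy⟩ := h
  have h1 : (gsingle Γ a)⁻¹ * wp Γ w = wp Γ (y ++ z) := by
    rw [wp_of_pull hd hy, inv_mul_cancel_left]
  show len Γ ((gsingle Γ a)⁻¹ * wp Γ w) < len Γ (wp Γ w)
  rw [h1, ← irr_length hw]
  have h2 := len_le (Γ := Γ) (y ++ z)
  have h3 : w.length = y.length + z.length + 1 := by rw [hd]; simp; omega
  have h4 : (y ++ z).length = y.length + z.length := by simp
  omega

lemma pull_of_init {w : Word V} {a : Letter V} (hw : Irr Γ w)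
    (h : a ∈ InitL Γ (wp Γ w)) : PullL Γ a w := by
  obtain ⟨t, ht, htl, -⟩ := exists_geodesic ((gsingle Γ a)⁻¹ * wp Γ w)
  have hwp : wp Γ (a :: t) = wp Γ w := by rw [wp_cons, ht, mul_inv_cancel_left]
  have hlen : (a :: t).length = len Γ (wp Γ (a :: t)) := by
    rw [hwp]
    have := mem_init_iff.1 h
    simp only [List.length_cons]
    omega
  have hirr : Irr Γ (a :: t) := irr_of_minimal hlen
  have hse : SE Γ w (a :: t) := we_irr_se (we_of_wp_eq hwp.symm) hw hirr
  obtain ⟨y, z, hd, hy, -⟩ :=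
    pull_plus w a t (fun u v huv => proj_se huv hse)
  exact ⟨y, z, hd, hy⟩

lemma exists_init {g : RAAG Γ} (h : g ≠ 1) : ∃ a, a ∈ InitL Γ g := by
  obtain ⟨w, hw, hl, hirr⟩ := exists_geodesic g
  cases w with
  | nil => exact absurd (by rw [← hw, wp_nil]) h
  | cons a t =>
      refine ⟨a, ?_⟩
      have := init_of_pull hirr ⟨[], t, rfl, by simp⟩
      rwa [hw] at this

/-! ### Additivity for elements with disjoint initial sets -/

lemma redu_invw {w : Word V} (h : Redu Γ w) : Redu Γ (invw w) := by
  obtain ⟨x, y, z, c, rfl, hy⟩ := h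
  refine ⟨invw z, invw y, invw x, c, by simp [invw_append, invw_cons], ?_⟩
  intro b hb
  rw [invw, List.mem_reverse, List.mem_map] at hb
  obtain ⟨b₀, hb₀, rfl⟩ := hb
  simpa using hy b₀ hb₀

lemma redu_append_split {p q x' y' z' : Word V} {c : Letter V}
    (hy : ∀ b ∈ y', Γ.Adj b.1 c.1)
    (h : p ++ q = x' ++ c :: y' ++ linv c :: z') :
    Redu Γ p ∨ Redu Γ q ∨
      ∃ d e, p = x' ++ c :: d ∧ q = e ++ linv c :: z' ∧ y' = d ++ e := by
  rcases List.append_eq_append_iff.1 h with ⟨m, hm1, hm2⟩ | ⟨m, hm1, hm2⟩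
  · -- x' ++ c :: y' = p ++ m, q = m ++ linv c :: z'
    rcases List.append_eq_append_iff.1 hm1.symm with ⟨k, hk1, hk2⟩ | ⟨k, hk1, hk2⟩
    · -- x' = p ++ k, m = k ++ (c :: y')
      right; left
      exact ⟨k, y', z', c, by simp [hm2, hk2], hy⟩
    · -- p = x' ++ k, c :: y' = k ++ m
      cases k with
      | nil =>
          right; left
          rw [List.nil_append] at hk2
          exact ⟨[], y', z', c, by simp [hm2, ← hk2], hy⟩
      | cons c₁ k' =>
          have hc₁ : c₁ = c := by
            simp only [List.cons_append] at hk2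
            exact (List.head_eq_of_cons_eq hk2).symm
          subst hc₁
          have hy' : y' = k' ++ m := by
            simp only [List.cons_append] at hk2
            exact List.tail_eq_of_cons_eq hk2
          right; right
          exact ⟨k', m, hk1, hm2, hy'⟩
  · -- p = (x' ++ c :: y') ++ m, linv c :: z' = m ++ q
    cases m with
    | nil =>
        right; right
        rw [List.nil_append] at hm2
        refine ⟨y', [], by simpa using hm1, by simp [hm2.symm], by simp⟩
    | cons c₁ m' =>
        have hc₁ : c₁ = linv c := by
          simp only [List.cons_append] at hm2
          exact (List.head_eq_of_cons_eq hm2).symm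
        subst hc₁
        have hz' : z' = m' ++ q := by
          simp only [List.cons_append] at hm2
          exact List.tail_eq_of_cons_eq hm2
        left
        refine ⟨x', y', m', c, ?_, hy⟩
        rw [hm1]

lemma init_disjoint_add {g h : RAAG Γ}
    (hdisj : ∀ a, a ∈ InitL Γ g → a ∈ InitL Γ h → False) :
    len Γ (g⁻¹ * h) = len Γ g + len Γ h := by
  obtain ⟨u, hu, hul, huirr⟩ := exists_geodesic g
  obtain ⟨t, ht, htl, htirr⟩ := exists_geodesic h
  have hw : wp Γ (invw u ++ t) = g⁻¹ * h := by rw [wp_append, wp_invw, hu, ht]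
  by_cases hirr : Irr Γ (invw u ++ t)
  · rw [← hw, ← irr_length hirr]
    simp [hul, htl]
  · exfalso
    have hred : Redu Γ (invw u ++ t) := not_not.1 hirr
    obtain ⟨x', y', z', c, hdec, hy⟩ := hred
    rcases redu_append_split hy hdec with hp | hq | ⟨d, e, hpd, hqd, hyd⟩
    · have h1 : Redu Γ (invw (invw u)) := redu_invw hp
      rw [invw_invw] at h1
      exact huirr h1
    · exact htirr hq
    · have hlc_t : PullL Γ (linv c) t := by
        refine ⟨e, z', hqd, fun b hb => ?_⟩
        have : b ∈ y' := by rw [hyd]; exact List.mem_append_right d hb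
        simpa using hy b this
      have h1 : linv c ∈ InitL Γ h := by
        have := init_of_pull htirr hlc_t
        rwa [ht] at this
      have hlc_u : PullL Γ (linv c) u := by
        have hu_eq : u = invw d ++ linv c :: invw x' := by
          have h2 := congrArg invw hpd
          rw [invw_invw] at h2
          rw [h2]
          simp [invw_append, invw_cons]
        refine ⟨invw d, invw x', hu_eq, fun b hb => ?_⟩
        rw [invw, List.mem_reverse, List.mem_map] at hb
        obtain ⟨b₀, hb₀, rfl⟩ := hb
        have : b₀ ∈ y' := by rw [hyd]; exact List.mem_append_left e hb₀
        simpa using hy b₀ this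
      have h2 : linv c ∈ InitL Γ g := by
        have := init_of_pull huirr hlc_u
        rwa [hu] at this
      exact hdisj _ h2 h1

/-! ### Prefixes and the exchange lemma -/

variable (Γ) in
/-- `q` lies on a geodesic from `1` to `g`. -/
def IsPref (q g : RAAG Γ) : Prop := len Γ g = len Γ q + len Γ (q⁻¹ * g)

lemma init_of_pref {q g : RAAG Γ} {a : Letter V} (h : IsPref Γ q g)
    (ha : a ∈ InitL Γ q) : a ∈ InitL Γ g := by
  have h1 := mem_init_iff.1 ha
  have h2 : (gsingle Γ a)⁻¹ * g = ((gsingle Γ a)⁻¹ * q) * (q⁻¹ * g) := by group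
  have h3 : len Γ ((gsingle Γ a)⁻¹ * g) ≤
      len Γ ((gsingle Γ a)⁻¹ * q) + len Γ (q⁻¹ * g) := by
    rw [h2]; exact len_mul_le _ _
  show len Γ ((gsingle Γ a)⁻¹ * g) < len Γ g
  rw [h] at *
  omega

lemma step_lemma {g q : RAAG Γ} {a : Letter V} (hpref : IsPref Γ q g)
    (ha : a ∈ InitL Γ g) (hna : a ∉ InitL Γ q) :
    Commute (gsingle Γ a) q ∧ a ∈ InitL Γ (q⁻¹ * g) := by
  obtain ⟨u, hu, hul, huirr⟩ := exists_geodesic q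
  obtain ⟨t, ht, htl, htirr⟩ := exists_geodesic (q⁻¹ * g)
  have hw : wp Γ (u ++ t) = g := by rw [wp_append, hu, ht, mul_inv_cancel_left]
  have hlen : (u ++ t).length = len Γ (wp Γ (u ++ t)) := by
    rw [hw, hpref]
    simp [hul, htl]
  have hirr : Irr Γ (u ++ t) := irr_of_minimal hlen
  obtain ⟨y, z, hd, hyA⟩ := pull_of_init hirr (by rw [hw]; exact ha)
  -- u ++ t = y ++ a :: z
  have main : (∀ b ∈ u, Γ.Adj b.1 a.1) ∧ PullL Γ a t := by
    rcases List.append_eq_append_iff.1 hd with ⟨m, hm1, hm2⟩ | ⟨m, hm1, hm2⟩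
    · -- y = u ++ m, t = m ++ a :: z
      refine ⟨fun b hb => hyA b (by rw [hm1]; exact List.mem_append_left m hb), ?_⟩
      exact ⟨m, z, hm2, fun b hb => hyA b (by rw [hm1]; exact List.mem_append_right u hb)⟩
    · -- u = y ++ m, a :: z = m ++ t
      cases m with
      | nil =>
          rw [List.nil_append] at hm2
          refine ⟨fun b hb => hyA b (by rw [← List.append_nil y, ← hm1]; exact hb), ?_⟩
          exact ⟨[], z, hm2.symm, by simp⟩
      | cons a₀ m' =>
          exfalso
          have ha₀ : a₀ = a := by
            simp only [List.cons_append] at hm2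
            exact (List.head_eq_of_cons_eq hm2).symm
          subst ha₀
          have hpu : PullL Γ a₀ u := ⟨y, m', hm1, fun b hb => hyA b hb⟩
          have := init_of_pull huirr hpu
          rw [hu] at this
          exact hna this
  constructor
  · have := comm_of_all_adj main.1
    rwa [hu] at this
  · have := init_of_pull htirr main.2
    rwa [ht] at this
/-! ### The median point -/

lemma len_triangle (q g : RAAG Γ) : len Γ g ≤ len Γ q + len Γ (q⁻¹ * g) := by
  have h := len_mul_le q (q⁻¹ * g)
  rwa [mul_inv_cancel_left] at h

noncomputable def med (b c : RAAG Γ) : RAAG Γ :=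
  if h : ∃ a, a ∈ InitL Γ b ∧ a ∈ InitL Γ c then
    gsingle Γ h.choose * med ((gsingle Γ h.choose)⁻¹ * b) ((gsingle Γ h.choose)⁻¹ * c)
  else 1
termination_by len Γ b
decreasing_by exact h.choose_spec.1

lemma med_spec : ∀ (n : ℕ) (b c : RAAG Γ), len Γ b ≤ n →
    IsPref Γ (med b c) b ∧ IsPref Γ (med b c) c ∧
      (len Γ (b⁻¹ * c) = len Γ ((med b c)⁻¹ * b) + len Γ ((med b c)⁻¹ * c)) ∧
      ∀ q, IsPref Γ q b → IsPref Γ q c → IsPref Γ q (med b c) := by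
  intro n
  induction n with
  | zero =>
      intro b c hb
      have hb1 : b = 1 := len_eq_zero_iff.1 (Nat.le_zero.1 hb)
      subst hb1
      have hne : ¬∃ a, a ∈ InitL Γ (1 : RAAG Γ) ∧ a ∈ InitL Γ c := by
        rintro ⟨a, ha, -⟩
        have h0 : len Γ ((gsingle Γ a)⁻¹ * 1) < len Γ (1 : RAAG Γ) := ha
        rw [len_one] at h0
        exact Nat.not_lt_zero _ h0
      have hm : med (1 : RAAG Γ) c = 1 := by rw [med, dif_neg hne]
      refine ⟨?_, ?_, ?_, ?_⟩
      · show len Γ (1 : RAAG Γ) = len Γ (med 1 c) + len Γ ((med 1 c)⁻¹ * 1)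
        rw [hm]; simp
      · show len Γ c = len Γ (med 1 c) + len Γ ((med 1 c)⁻¹ * c)
        rw [hm]; simp
      · rw [hm]; simp
      · intro q hq1 hqc
        have h0 : len Γ (1 : RAAG Γ) = len Γ q + len Γ (q⁻¹ * 1) := hq1
        rw [len_one] at h0
        have hq : q = 1 := len_eq_zero_iff.1 (by omega)
        subst hq
        show len Γ (med 1 c) = len Γ (1 : RAAG Γ) + len Γ (1⁻¹ * med 1 c)
        simp
  | succ n ih =>
      intro b c hb
      by_cases h : ∃ a, a ∈ InitL Γ b ∧ a ∈ InitL Γ c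
      · -- strip a common initial letter
        have hm : med b c = gsingle Γ h.choose *
            med ((gsingle Γ h.choose)⁻¹ * b) ((gsingle Γ h.choose)⁻¹ * c) := by
          rw [med, dif_pos h]
        obtain ⟨hab, hac⟩ := h.choose_spec
        generalize hA : h.choose = a at hm hab hac
        have hb' := mem_init_iff.1 hab
        have hc' := mem_init_iff.1 hac
        obtain ⟨E1', E2', E3', MAX'⟩ :=
          ih ((gsingle Γ a)⁻¹ * b) ((gsingle Γ a)⁻¹ * c) (by omega)
        have E1'' : len Γ ((gsingle Γ a)⁻¹ * b) =
            len Γ (med ((gsingle Γ a)⁻¹ * b) ((gsingle Γ a)⁻¹ * c)) +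
            len Γ ((med ((gsingle Γ a)⁻¹ * b) ((gsingle Γ a)⁻¹ * c))⁻¹ *
              ((gsingle Γ a)⁻¹ * b)) := E1'
        have E2'' : len Γ ((gsingle Γ a)⁻¹ * c) =
            len Γ (med ((gsingle Γ a)⁻¹ * b) ((gsingle Γ a)⁻¹ * c)) +
            len Γ ((med ((gsingle Γ a)⁻¹ * b) ((gsingle Γ a)⁻¹ * c))⁻¹ *
              ((gsingle Γ a)⁻¹ * c)) := E2'
        set m' := med ((gsingle Γ a)⁻¹ * b) ((gsingle Γ a)⁻¹ * c) with hm'def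
        have hmb : (med b c)⁻¹ * b = m'⁻¹ * ((gsingle Γ a)⁻¹ * b) := by
          rw [hm]; group
        have hmc : (med b c)⁻¹ * c = m'⁻¹ * ((gsingle Γ a)⁻¹ * c) := by
          rw [hm]; group
        have e0le : len Γ (med b c) ≤ 1 + len Γ m' := by
          rw [hm]
          have h4 := len_mul_le (gsingle Γ a) m'
          have h5 := len_gsingle (Γ := Γ) a
          omega
        have e0ge : len Γ b ≤ len Γ (med b c) + len Γ (m'⁻¹ * ((gsingle Γ a)⁻¹ * b)) := by
          have h4 := len_triangle (med b c) b
          rwa [hmb] at h4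
        have E0 : len Γ (med b c) = 1 + len Γ m' := by omega
        refine ⟨?_, ?_, ?_, ?_⟩
        · show len Γ b = len Γ (med b c) + len Γ ((med b c)⁻¹ * b)
          rw [hmb]; omega
        · show len Γ c = len Γ (med b c) + len Γ ((med b c)⁻¹ * c)
          rw [hmc]; omega
        · have hbc : b⁻¹ * c = ((gsingle Γ a)⁻¹ * b)⁻¹ * ((gsingle Γ a)⁻¹ * c) := by
            group
          rw [hbc, hmb, hmc]
          exact E3'
        · intro q hqb hqc
          have hqb'' : len Γ b = len Γ q + len Γ (q⁻¹ * b) := hqb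
          have hqc'' : len Γ c = len Γ q + len Γ (q⁻¹ * c) := hqc
          by_cases haq : a ∈ InitL Γ q
          · -- strip a from q as well
            have hq' := mem_init_iff.1 haq
            have hel1 : ((gsingle Γ a)⁻¹ * q)⁻¹ * ((gsingle Γ a)⁻¹ * b) = q⁻¹ * b := by
              group
            have hel1c : ((gsingle Γ a)⁻¹ * q)⁻¹ * ((gsingle Γ a)⁻¹ * c) = q⁻¹ * c := by
              group
            have hqb' : IsPref Γ ((gsingle Γ a)⁻¹ * q) ((gsingle Γ a)⁻¹ * b) := by
              show len Γ ((gsingle Γ a)⁻¹ * b) = len Γ ((gsingle Γ a)⁻¹ * q) +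
                len Γ (((gsingle Γ a)⁻¹ * q)⁻¹ * ((gsingle Γ a)⁻¹ * b))
              rw [hel1]; omega
            have hqc' : IsPref Γ ((gsingle Γ a)⁻¹ * q) ((gsingle Γ a)⁻¹ * c) := by
              show len Γ ((gsingle Γ a)⁻¹ * c) = len Γ ((gsingle Γ a)⁻¹ * q) +
                len Γ (((gsingle Γ a)⁻¹ * q)⁻¹ * ((gsingle Γ a)⁻¹ * c))
              rw [hel1c]; omega
            have hpref' : len Γ m' = len Γ ((gsingle Γ a)⁻¹ * q) +
                len Γ (((gsingle Γ a)⁻¹ * q)⁻¹ * m') := MAX' _ hqb' hqc'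
            have hel2 : ((gsingle Γ a)⁻¹ * q)⁻¹ * m' = q⁻¹ * med b c := by
              rw [hm]; group
            rw [hel2] at hpref'
            show len Γ (med b c) = len Γ q + len Γ (q⁻¹ * med b c)
            omega
          · -- a commutes past q
            obtain ⟨hcommb, hinitb⟩ := step_lemma hqb hab haq
            obtain ⟨-, hinitc⟩ := step_lemma hqc hac haq
            have hib := mem_init_iff.1 hinitb
            have hic := mem_init_iff.1 hinitc
            have hel3 : q⁻¹ * ((gsingle Γ a)⁻¹ * b) = (gsingle Γ a)⁻¹ * (q⁻¹ * b) := by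
              rw [← mul_assoc, ← hcommb.inv_left.inv_right.eq, mul_assoc]
            have hel3c : q⁻¹ * ((gsingle Γ a)⁻¹ * c) = (gsingle Γ a)⁻¹ * (q⁻¹ * c) := by
              rw [← mul_assoc, ← hcommb.inv_left.inv_right.eq, mul_assoc]
            have hqb' : IsPref Γ q ((gsingle Γ a)⁻¹ * b) := by
              show len Γ ((gsingle Γ a)⁻¹ * b) = len Γ q +
                len Γ (q⁻¹ * ((gsingle Γ a)⁻¹ * b))
              rw [hel3]; omega
            have hqc' : IsPref Γ q ((gsingle Γ a)⁻¹ * c) := by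
              show len Γ ((gsingle Γ a)⁻¹ * c) = len Γ q +
                len Γ (q⁻¹ * ((gsingle Γ a)⁻¹ * c))
              rw [hel3c]; omega
            have hprefm : len Γ m' = len Γ q + len Γ (q⁻¹ * m') := MAX' q hqb' hqc'
            have hel4 : q⁻¹ * med b c = gsingle Γ a * (q⁻¹ * m') := by
              rw [hm, ← mul_assoc, ← hcommb.inv_right.eq, mul_assoc]
            have h5 : len Γ (q⁻¹ * med b c) ≤ 1 + len Γ (q⁻¹ * m') := by
              rw [hel4]
              have h6 := len_mul_le (gsingle Γ a) (q⁻¹ * m')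
              have h7 := len_gsingle (Γ := Γ) a
              omega
            have h6 := len_triangle q (med b c)
            show len Γ (med b c) = len Γ q + len Γ (q⁻¹ * med b c)
            omega
      · -- no common initial letter: the median is the basepoint
        have hm : med b c = 1 := by rw [med, dif_neg h]
        have hdisj : ∀ a, a ∈ InitL Γ b → a ∈ InitL Γ c → False :=
          fun a h1 h2 => h ⟨a, h1, h2⟩
        refine ⟨?_, ?_, ?_, ?_⟩
        · show len Γ b = len Γ (med b c) + len Γ ((med b c)⁻¹ * b)
          rw [hm]; simp
        · show len Γ c = len Γ (med b c) + len Γ ((med b c)⁻¹ * c)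
          rw [hm]; simp
        · rw [hm]
          simp only [inv_one, one_mul]
          exact init_disjoint_add hdisj
        · intro q hqb hqc
          by_cases hq1 : q = 1
          · subst hq1
            show len Γ (med b c) = len Γ (1 : RAAG Γ) + len Γ (1⁻¹ * med b c)
            simp
          · obtain ⟨a, ha⟩ := exists_init hq1
            exact absurd (init_of_pref hqc ha)
              (fun hc => hdisj a (init_of_pref hqb ha) hc)

lemma med_unique {b c q : RAAG Γ}
    (h1 : len Γ b = len Γ q + len Γ (q⁻¹ * b))
    (h2 : len Γ c = len Γ q + len Γ (q⁻¹ * c))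
    (h3 : len Γ (b⁻¹ * c) = len Γ (q⁻¹ * b) + len Γ (q⁻¹ * c)) :
    q = med b c := by
  obtain ⟨E1, E2, E3, MAX⟩ := med_spec (len Γ b) b c le_rfl
  have E1' : len Γ b = len Γ (med b c) + len Γ ((med b c)⁻¹ * b) := E1
  have E2' : len Γ c = len Γ (med b c) + len Γ ((med b c)⁻¹ * c) := E2
  have hpref : len Γ (med b c) = len Γ q + len Γ (q⁻¹ * med b c) :=
    MAX q h1 h2
  have t1 : len Γ (q⁻¹ * b) ≤ len Γ (q⁻¹ * med b c) + len Γ ((med b c)⁻¹ * b) := by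
    have h4 := len_mul_le (q⁻¹ * med b c) ((med b c)⁻¹ * b)
    have h5 : (q⁻¹ * med b c) * ((med b c)⁻¹ * b) = q⁻¹ * b := by group
    rwa [h5] at h4
  have t2 : len Γ (q⁻¹ * c) ≤ len Γ (q⁻¹ * med b c) + len Γ ((med b c)⁻¹ * c) := by
    have h4 := len_mul_le (q⁻¹ * med b c) ((med b c)⁻¹ * c)
    have h5 : (q⁻¹ * med b c) * ((med b c)⁻¹ * c) = q⁻¹ * c := by group
    rwa [h5] at h4
  have hz : len Γ (q⁻¹ * med b c) = 0 := by omega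
  have := len_eq_zero_iff.1 hz
  exact inv_mul_eq_one.1 this

/-- Existence and uniqueness of medians, in terms of the length function. -/
lemma median_len (b c : RAAG Γ) :
    ∃! m : RAAG Γ, len Γ b = len Γ m + len Γ (m⁻¹ * b) ∧
      len Γ c = len Γ m + len Γ (m⁻¹ * c) ∧
      len Γ (b⁻¹ * c) = len Γ (m⁻¹ * b) + len Γ (m⁻¹ * c) := by
  obtain ⟨E1, E2, E3, -⟩ := med_spec (len Γ b) b c le_rfl
  refine ⟨med b c, ⟨E1, E2, E3⟩, ?_⟩
  rintro q ⟨h1, h2, h3⟩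
  exact med_unique h1 h2 h3
end RaagMedian

/-- The Cayley graph `M(Γ)` is a median graph: any three vertices admit a unique
median point. -/
theorem cayleyM_median {V : Type u} (Γ : SimpleGraph V) (x : Fin 3 → RAAG Γ) :
    ∃! m : RAAG Γ, ∀ i j : Fin 3, i ≠ j →
      (cayleyM Γ).dist (x i) (x j) =
        (cayleyM Γ).dist (x i) m + (cayleyM Γ).dist m (x j) := by
  obtain ⟨m₀, ⟨h1, h2, h3⟩, huniq⟩ :=
    RaagMedian.median_len ((x 0)⁻¹ * x 1) ((x 0)⁻¹ * x 2)
  refine ⟨x 0 * m₀, ?_, ?_⟩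
  · intro i j hij
    have e0 : ∀ (h : 0 < 3), (⟨0, h⟩ : Fin 3) = 0 := fun _ => rfl
    have e1 : ∀ (h : 1 < 3), (⟨1, h⟩ : Fin 3) = 1 := fun _ => rfl
    have e2 : ∀ (h : 2 < 3), (⟨2, h⟩ : Fin 3) = 2 := fun _ => rfl
    fin_cases i <;> fin_cases j <;> simp only [e0, e1, e2, RaagMedian.dist_eq_len]
    · exact absurd rfl hij
    · -- (0,1)
      rw [show (x 0)⁻¹ * (x 0 * m₀) = m₀ by group,
        show (x 0 * m₀)⁻¹ * x 1 = m₀⁻¹ * ((x 0)⁻¹ * x 1) by group]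
      exact h1
    · -- (0,2)
      rw [show (x 0)⁻¹ * (x 0 * m₀) = m₀ by group,
        show (x 0 * m₀)⁻¹ * x 2 = m₀⁻¹ * ((x 0)⁻¹ * x 2) by group]
      exact h2
    · -- (1,0)
      rw [show (x 1)⁻¹ * x 0 = ((x 0)⁻¹ * x 1)⁻¹ by group, RaagMedian.len_inv,
        show (x 1)⁻¹ * (x 0 * m₀) = (m₀⁻¹ * ((x 0)⁻¹ * x 1))⁻¹ by group,
        RaagMedian.len_inv,
        show (x 0 * m₀)⁻¹ * x 0 = m₀⁻¹ by group, RaagMedian.len_inv]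
      omega
    · exact absurd rfl hij
    · -- (1,2)
      rw [show (x 1)⁻¹ * x 2 = ((x 0)⁻¹ * x 1)⁻¹ * ((x 0)⁻¹ * x 2) by group,
        show (x 1)⁻¹ * (x 0 * m₀) = (m₀⁻¹ * ((x 0)⁻¹ * x 1))⁻¹ by group,
        RaagMedian.len_inv,
        show (x 0 * m₀)⁻¹ * x 2 = m₀⁻¹ * ((x 0)⁻¹ * x 2) by group]
      exact h3
    · -- (2,0)
      rw [show (x 2)⁻¹ * x 0 = ((x 0)⁻¹ * x 2)⁻¹ by group, RaagMedian.len_inv,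
        show (x 2)⁻¹ * (x 0 * m₀) = (m₀⁻¹ * ((x 0)⁻¹ * x 2))⁻¹ by group,
        RaagMedian.len_inv,
        show (x 0 * m₀)⁻¹ * x 0 = m₀⁻¹ by group, RaagMedian.len_inv]
      omega
    · -- (2,1)
      rw [show (x 2)⁻¹ * x 1 = (((x 0)⁻¹ * x 1)⁻¹ * ((x 0)⁻¹ * x 2))⁻¹ by group,
        RaagMedian.len_inv,
        show (x 2)⁻¹ * (x 0 * m₀) = (m₀⁻¹ * ((x 0)⁻¹ * x 2))⁻¹ by group,
        RaagMedian.len_inv,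
        show (x 0 * m₀)⁻¹ * x 1 = m₀⁻¹ * ((x 0)⁻¹ * x 1) by group]
      omega
    · exact absurd rfl hij
  · intro m' hm'
    have k01 := hm' 0 1 (by decide)
    have k02 := hm' 0 2 (by decide)
    have k12 := hm' 1 2 (by decide)
    simp only [RaagMedian.dist_eq_len] at k01 k02 k12
    have h1' : RaagMedian.len Γ ((x 0)⁻¹ * x 1) =
        RaagMedian.len Γ ((x 0)⁻¹ * m') +
        RaagMedian.len Γ (((x 0)⁻¹ * m')⁻¹ * ((x 0)⁻¹ * x 1)) := by
      rw [show ((x 0)⁻¹ * m')⁻¹ * ((x 0)⁻¹ * x 1) = m'⁻¹ * x 1 by group]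
      exact k01
    have h2' : RaagMedian.len Γ ((x 0)⁻¹ * x 2) =
        RaagMedian.len Γ ((x 0)⁻¹ * m') +
        RaagMedian.len Γ (((x 0)⁻¹ * m')⁻¹ * ((x 0)⁻¹ * x 2)) := by
      rw [show ((x 0)⁻¹ * m')⁻¹ * ((x 0)⁻¹ * x 2) = m'⁻¹ * x 2 by group]
      exact k02
    have h3' : RaagMedian.len Γ (((x 0)⁻¹ * x 1)⁻¹ * ((x 0)⁻¹ * x 2)) =
        RaagMedian.len Γ (((x 0)⁻¹ * m')⁻¹ * ((x 0)⁻¹ * x 1)) +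
        RaagMedian.len Γ (((x 0)⁻¹ * m')⁻¹ * ((x 0)⁻¹ * x 2)) := by
      rw [show ((x 0)⁻¹ * x 1)⁻¹ * ((x 0)⁻¹ * x 2) = (x 1)⁻¹ * x 2 by group,
        show ((x 0)⁻¹ * m')⁻¹ * ((x 0)⁻¹ * x 1) = m'⁻¹ * x 1 by group,
        show ((x 0)⁻¹ * m')⁻¹ * ((x 0)⁻¹ * x 2) = m'⁻¹ * x 2 by group]
      rw [show (x 1)⁻¹ * m' = (m'⁻¹ * x 1)⁻¹ by group, RaagMedian.len_inv] at k12
      exact k12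
    have hq := huniq ((x 0)⁻¹ * m') ⟨h1', h2', h3'⟩
    rw [← hq, mul_inv_cancel_left]
end
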